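/- arXiv:0907.4573 — 8 statements merged into one kernel-verified Lean document; each statement's English description precedes it below -/
import Mathlib

section
/- Let X be a real random variable with E(X) = 0, E(X²) = σ² > 0, and E(X⁴) ≤ b·σ⁴ for some b > 0. Then P(X ≥ σ/(2√b)) > 0. -/
/-!
Integrating the pointwise inequality `3 c² x² ≤ 2 c³ |x| + x⁴` at `c = σ √b` turns the fourth
moment bound into the first moment bound `E|X| ≥ σ / √b`. As `E X = 0`, the positive part carries
half of `E|X|`, so `E X⁺ ≥ σ / (2 √b)`, and by the first moment method `X⁺ ≥ E X⁺` on a set of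
positive probability.
-/

open MeasureTheory

-- `x⁴ - 3 c² x² + 2 c³ |x| = |x| (|x| - c)² (|x| + 2 c)`
lemma three_mul_sq_mul_sq_le_two_mul_pow_three_mul_abs_add_pow_four {c : ℝ} (hc : 0 ≤ c)
    (x : ℝ) : 3 * c ^ 2 * x ^ 2 ≤ 2 * c ^ 3 * |x| + x ^ 4 := by
  have hx2 : x ^ 2 = |x| ^ 2 := (sq_abs x).symm
  have hx4 : x ^ 4 = |x| ^ 4 := (Even.pow_abs (by decide) x).symm
  rw [hx2, hx4]
  have := mul_nonneg (mul_nonneg (abs_nonneg x) (sq_nonneg (|x| - c)))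
    (add_nonneg (abs_nonneg x) (mul_nonneg zero_le_two hc))
  nlinarith

section Moments

variable {Ω : Type*} [MeasurableSpace Ω] {μ : Measure Ω} {X : Ω → ℝ}

lemma three_mul_sq_mul_integral_sq_le {c : ℝ} (hc : 0 ≤ c) (h1 : Integrable X μ)
    (h2 : Integrable (fun ω => X ω ^ 2) μ) (h4 : Integrable (fun ω => X ω ^ 4) μ) :
    3 * c ^ 2 * ∫ ω, X ω ^ 2 ∂μ ≤ 2 * c ^ 3 * ∫ ω, |X ω| ∂μ + ∫ ω, X ω ^ 4 ∂μ := by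
  rw [← integral_const_mul, ← integral_const_mul, ← integral_add (h1.abs.const_mul _) h4]
  exact integral_mono (h2.const_mul _) ((h1.abs.const_mul _).add h4)
    (three_mul_sq_mul_sq_le_two_mul_pow_three_mul_abs_add_pow_four hc <| X ·)

lemma div_sqrt_le_integral_abs {σ b : ℝ} (hσ : 0 < σ) (hb : 0 < b) (h1 : Integrable X μ)
    (h2 : Integrable (fun ω => X ω ^ 2) μ) (h4 : Integrable (fun ω => X ω ^ 4) μ)
    (hE2 : ∫ ω, X ω ^ 2 ∂μ = σ ^ 2) (hE4 : ∫ ω, X ω ^ 4 ∂μ ≤ b * σ ^ 4) :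
    σ / Real.sqrt b ≤ ∫ ω, |X ω| ∂μ := by
  have hsb : 0 < Real.sqrt b := Real.sqrt_pos.2 hb
  have key := three_mul_sq_mul_integral_sq_le (mul_pos hσ hsb).le h1 h2 h4
  rw [hE2, mul_pow, mul_pow, Real.sq_sqrt hb.le,
    show Real.sqrt b ^ 3 = b * Real.sqrt b by rw [pow_succ, Real.sq_sqrt hb.le]] at key
  rw [div_le_iff₀ hsb]
  have hbσ : 0 < 2 * b * σ ^ 3 := by positivity
  nlinarith

lemma integral_abs_eq_two_mul_integral_max_zero (h1 : Integrable X μ)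
    (hE1 : ∫ ω, X ω ∂μ = 0) : ∫ ω, |X ω| ∂μ = 2 * ∫ ω, max (X ω) 0 ∂μ := by
  have habs : ∀ ω, |X ω| = 2 * max (X ω) 0 - X ω := fun ω => by
    rcases le_total (X ω) 0 with h | h
    · rw [abs_of_nonpos h, max_eq_right h]; ring
    · rw [abs_of_nonneg h, max_eq_left h]; ring
  simp only [habs]
  rw [integral_sub (h1.pos_part.const_mul 2) h1, integral_const_mul, hE1, sub_zero]

end Moments

theorem stmt_1_general {Ω : Type*} [MeasurableSpace Ω] (μ : Measure Ω) [IsProbabilityMeasure μ]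
    (X : Ω → ℝ) (σ b : ℝ) (hσ : 0 < σ) (hb : 0 < b)
    (h1 : Integrable X μ)
    (h2 : Integrable (fun ω => (X ω) ^ 2) μ)
    (h4 : Integrable (fun ω => (X ω) ^ 4) μ)
    (hE1 : ∫ ω, X ω ∂μ = 0)
    (hE2 : ∫ ω, (X ω) ^ 2 ∂μ = σ ^ 2)
    (hE4 : ∫ ω, (X ω) ^ 4 ∂μ ≤ b * σ ^ 4) :
    0 < μ {ω | σ / (2 * Real.sqrt b) ≤ X ω} := by
  have hmean : σ / (2 * Real.sqrt b) ≤ ∫ ω, max (X ω) 0 ∂μ := by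
    have h := div_sqrt_le_integral_abs hσ hb h1 h2 h4 hE2 hE4
    rw [integral_abs_eq_two_mul_integral_max_zero h1 hE1] at h
    rw [mul_comm, ← div_div]
    linarith
  have ht : 0 < σ / (2 * Real.sqrt b) := by positivity
  refine (measure_integral_le_pos h1.pos_part).trans_le (measure_mono fun ω hω => ?_)
  exact (le_max_iff.1 (hmean.trans hω)).resolve_right ht.not_ge

/-- If `E(X) = 0`, `E(X²) = σ² > 0` and `E(X⁴) ≤ b·σ⁴`, then
`P(X ≥ σ/(2√b)) > 0`. -/
theorem stmt_1 {Ω : Type*} [MeasurableSpace Ω] (μ : Measure Ω) [IsProbabilityMeasure μ]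
    (X : Ω → ℝ) (hX : Measurable X) (σ b : ℝ) (hσ : 0 < σ) (hb : 0 < b)
    (h1 : Integrable X μ)
    (h2 : Integrable (fun ω => (X ω) ^ 2) μ)
    (h4 : Integrable (fun ω => (X ω) ^ 4) μ)
    (hE1 : ∫ ω, X ω ∂μ = 0)
    (hE2 : ∫ ω, (X ω) ^ 2 ∂μ = σ ^ 2)
    (hE4 : ∫ ω, (X ω) ^ 4 ∂μ ≤ b * σ ^ 4) :
    0 < μ {ω | σ / (2 * Real.sqrt b) ≤ X ω} :=
  stmt_1_general μ X σ b hσ hb h1 h2 h4 hE1 hE2 hE4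
end

section
/- Every truth assignment to a semicomplete r-CNF formula satisfies exactly 2^r − 1 of its 2^r clauses. -/
open scoped Classical

/-- A clause is proper of size `r` if it has exactly `r` literals on `r` distinct
variables (a literal is a variable together with a polarity, `true` = positive). -/
def ProperClause {n : ℕ} (r : ℕ) (C : Finset (Fin n × Bool)) : Prop :=
  C.card = r ∧ (C.image Prod.fst).card = r

/-- A truth assignment satisfies a clause if some literal of the clause evaluates to
true under it. -/
def Sat {n : ℕ} (τ : Fin n → Bool) (C : Finset (Fin n × Bool)) : Prop :=
  ∃ p ∈ C, τ p.1 = p.2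

/-- Counting assignments fixed on a set of variables. -/
lemma count_fix {n : ℕ} (s : Finset (Fin n)) (g : Fin n → Bool) :
    (Finset.univ.filter (fun τ : Fin n → Bool => ∀ v ∈ s, τ v = g v)).card
      = 2 ^ (n - s.card) := by
  classical
  rw [← Fintype.card_subtype]
  have e : {τ : Fin n → Bool // ∀ v ∈ s, τ v = g v} ≃ ({v : Fin n // v ∉ s} → Bool) :=
    { toFun := fun τ v => τ.1 v.1
      invFun := fun h => ⟨fun v => if hv : v ∈ s then g v else h ⟨v, hv⟩,
        fun v hv => by simp [hv]⟩
      left_inv := by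
        intro τ
        ext v
        by_cases hv : v ∈ s
        · simp [hv, τ.2 v hv]
        · simp [hv]
      right_inv := by
        intro h
        ext v
        simp [v.2] }
  rw [Fintype.card_congr e]
  have : Fintype.card {v : Fin n // v ∉ s} = n - s.card := by
    rw [Fintype.card_subtype]
    have : Finset.univ.filter (fun v : Fin n => v ∉ s) = sᶜ := by
      ext v; simp
    rw [this, Finset.card_compl, Fintype.card_fin]
  simp [this]

lemma unsat_count {n r : ℕ} (C : Finset (Fin n × Bool)) (hC : ProperClause r C) :
    (Finset.univ.filter (fun τ : Fin n → Bool => ¬ Sat τ C)).card = 2 ^ (n - r) := by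
  classical
  obtain ⟨hc, hi⟩ := hC
  have hinj : Set.InjOn Prod.fst (C : Set (Fin n × Bool)) :=
    Finset.card_image_iff.mp (hi.trans hc.symm)
  have huniq : ∀ p ∈ C, ∀ q ∈ C, p.1 = q.1 → p = q := by
    intro p hp q hq h
    exact hinj hp hq h
  set g : Fin n → Bool := fun v =>
    if h : ∃ b, (v, b) ∈ C then !(Classical.choose h) else true with hg
  have hgv : ∀ (v : Fin n) (h : ∃ b, (v, b) ∈ C), g v = !(Classical.choose h) := by
    intro v h
    rw [hg]
    exact dif_pos h
  have key : ∀ τ : Fin n → Bool,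
      (¬ Sat τ C) ↔ ∀ v ∈ C.image Prod.fst, τ v = g v := by
    intro τ
    constructor
    · intro hns v hv
      obtain ⟨p, hp, hpv⟩ := Finset.mem_image.mp hv
      have hex : ∃ b, (v, b) ∈ C := ⟨p.2, by rw [← hpv]; exact hp⟩
      have hmem := Classical.choose_spec hex
      have hne : τ v ≠ Classical.choose hex := by
        intro h
        exact hns ⟨(v, Classical.choose hex), hmem, h⟩
      rw [hgv v hex]
      cases h1 : τ v <;> cases h2 : Classical.choose hex <;> simp_all
    · intro h hs
      obtain ⟨p, hp, hps⟩ := hs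
      have hv : p.1 ∈ C.image Prod.fst := Finset.mem_image_of_mem _ hp
      have hex : ∃ b, (p.1, b) ∈ C := ⟨p.2, by simpa using hp⟩
      have hmem := Classical.choose_spec hex
      have heq : (p.1, Classical.choose hex) = p := huniq _ hmem _ hp rfl
      have hch : Classical.choose hex = p.2 := congrArg Prod.snd heq
      have h2 := h p.1 hv
      rw [hps, hgv p.1 hex, hch] at h2
      cases hb : p.2 <;> simp [hb] at h2
  have : Finset.univ.filter (fun τ : Fin n → Bool => ¬ Sat τ C)
      = Finset.univ.filter (fun τ => ∀ v ∈ C.image Prod.fst, τ v = g v) := by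
    ext τ; simp [key τ]
  rw [this, count_fix, hi]

/-- Every truth assignment to a semicomplete `r`-CNF formula (a set of `2^r` clauses of
size `r`, every pair of distinct clauses having a conflict) satisfies exactly
`2^r − 1` clauses. -/
theorem stmt_7 (n r : ℕ) (F : Finset (Finset (Fin n × Bool)))
    (hcard : F.card = 2 ^ r)
    (hproper : ∀ C ∈ F, ProperClause r C)
    (hconf : ∀ C ∈ F, ∀ D ∈ F, C ≠ D → ∃ p ∈ C, (p.1, !p.2) ∈ D) :
    ∀ τ : Fin n → Bool, (F.filter (Sat τ)).card = 2 ^ r - 1 := by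
  classical
  have hFne : F.Nonempty := by
    rw [← Finset.card_pos, hcard]; positivity
  have hrn : r ≤ n := by
    obtain ⟨C, hC⟩ := hFne
    have := (hproper C hC).2
    calc r = (C.image Prod.fst).card := this.symm
      _ ≤ Fintype.card (Fin n) := Finset.card_le_univ _
      _ = n := Fintype.card_fin n
  have hdisj : ∀ τ : Fin n → Bool, ∀ C ∈ F, ∀ D ∈ F,
      ¬ Sat τ C → ¬ Sat τ D → C = D := by
    intro τ C hC D hD hnC hnD
    by_contra hne
    obtain ⟨p, hp, hpD⟩ := hconf C hC D hD hne
    by_cases h : τ p.1 = p.2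
    · exact hnC ⟨p, hp, h⟩
    · refine hnD ⟨(p.1, !p.2), hpD, ?_⟩
      cases h1 : τ p.1 <;> cases h2 : p.2 <;> simp_all
  set S : Finset (Fin n × Bool) → Finset (Fin n → Bool) :=
    fun C => Finset.univ.filter (fun τ => ¬ Sat τ C) with hS
  have hScard : ∀ C ∈ F, (S C).card = 2 ^ (n - r) := fun C hC =>
    unsat_count C (hproper C hC)
  have hpw : ∀ C ∈ F, ∀ D ∈ F, C ≠ D → Disjoint (S C) (S D) := by
    intro C hC D hD hne
    rw [Finset.disjoint_left]
    intro τ hτC hτD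
    simp only [hS, Finset.mem_filter] at hτC hτD
    exact hne (hdisj τ C hC D hD hτC.2 hτD.2)
  have hbu : (F.biUnion S).card = 2 ^ n := by
    rw [Finset.card_biUnion hpw]
    rw [Finset.sum_congr rfl hScard, Finset.sum_const, hcard, smul_eq_mul,
      ← pow_add]
    congr 1
    omega
  have hcover : F.biUnion S = Finset.univ := by
    apply Finset.eq_univ_of_card
    rw [hbu]
    simp [Fintype.card_fin]
  intro τ
  have hτ : τ ∈ F.biUnion S := hcover ▸ Finset.mem_univ τ
  obtain ⟨C, hC, hτC⟩ := Finset.mem_biUnion.mp hτ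
  simp only [hS, Finset.mem_filter] at hτC
  have h1 : (F.filter (fun D => ¬ Sat τ D)).card = 1 := by
    rw [Finset.card_eq_one]
    refine ⟨C, ?_⟩
    ext D
    simp only [Finset.mem_filter, Finset.mem_singleton]
    constructor
    · rintro ⟨hD, hnD⟩
      exact (hdisj τ C hC D hD hτC.2 hnD).symm
    · rintro rfl
      exact ⟨hC, hτC.2⟩
  have := Finset.card_filter_add_card_filter_not (s := F) (p := Sat τ)
  rw [h1, hcard] at this
  omega
end

section
/- Let F be an r-CNF formula and let F^S be obtained from F by repeatedly deleting semicomplete subsets. Then sat(F) − sat(F^S) = (1 − 2^{−r}) · (|F| − |F^S|), where sat denotes the maximum number of simultaneously satisfiable clauses and |·| denotes the number of clauses (with multiplicity). -/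
open scoped Classical

/-- `maxSat F` is the maximum number of clauses of the multiset `F` simultaneously
satisfiable by a truth assignment. -/
noncomputable def maxSat {n : ℕ} (F : Multiset (Finset (Fin n × Bool))) : ℕ :=
  Finset.univ.sup fun τ : Fin n → Bool => F.countP (Sat τ)

/-- A multiset of clauses is semicomplete (for size `r`) if it consists of `2^r`
distinct proper clauses of size `r` and every pair of distinct clauses has a
conflict. -/
def Semicomplete {n : ℕ} (r : ℕ) (G : Multiset (Finset (Fin n × Bool))) : Prop :=
  G.card = 2 ^ r ∧ G.Nodup ∧ (∀ C ∈ G, ProperClause r C) ∧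
    ∀ C ∈ G, ∀ D ∈ G, C ≠ D → ∃ p ∈ C, (p.1, !p.2) ∈ D

-- auxiliary
def Falsifies {n : ℕ} (τ : Fin n → Bool) (C : Finset (Fin n × Bool)) : Prop :=
  ∀ p ∈ C, τ p.1 = !p.2

lemma not_sat_iff {n : ℕ} (τ : Fin n → Bool) (C : Finset (Fin n × Bool)) :
    ¬ Sat τ C ↔ Falsifies τ C := by
  unfold Sat Falsifies
  push_neg
  constructor
  · intro h p hp
    have := h p hp
    cases hb : p.2 <;> cases ht : τ p.1 <;> simp_all
  · intro h p hp
    rw [h p hp]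
    cases p.2 <;> simp

lemma card_forced {n : ℕ} (A : Finset (Fin n)) (g : Fin n → Bool) :
    (Finset.univ.filter fun τ : Fin n → Bool => ∀ x ∈ A, τ x = g x).card
      = 2 ^ (n - A.card) := by
  rw [← Fintype.card_subtype]
  have e : {τ : Fin n → Bool // ∀ x ∈ A, τ x = g x} ≃ ({x : Fin n // x ∉ A} → Bool) :=
    { toFun := fun τ x => τ.1 x.1
      invFun := fun f => ⟨fun x => if h : x ∈ A then g x else f ⟨x, h⟩, by
        intro x hx; simp [hx]⟩
      left_inv := by
        rintro ⟨τ, hτ⟩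
        ext x
        by_cases h : x ∈ A <;> simp [h, hτ x]
      right_inv := by
        intro f
        funext x
        simp [x.2] }
  rw [Fintype.card_congr e, Fintype.card_fun]
  have : Fintype.card {x : Fin n // x ∉ A} = n - A.card := by
    simp [Fintype.card_subtype_compl, Fintype.card_coe]
  rw [this]
  simp

lemma card_falsifies {n r : ℕ} {C : Finset (Fin n × Bool)} (hC : ProperClause r C) :
    (Finset.univ.filter fun τ : Fin n → Bool => Falsifies τ C).card = 2 ^ (n - r) := by
  obtain ⟨hcard, himg⟩ := hC
  have hinj : Set.InjOn Prod.fst (C : Set (Fin n × Bool)) := by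
    rw [← Finset.card_image_iff]
    rw [himg, hcard]
  set g : Fin n → Bool := fun x =>
    if h : ∃ b, (x, b) ∈ C then !(Classical.choose h) else false with hg
  have key : ∀ τ : Fin n → Bool,
      Falsifies τ C ↔ ∀ x ∈ C.image Prod.fst, τ x = g x := by
    intro τ
    constructor
    · intro hfal x hx
      obtain ⟨p, hp, hpx⟩ := Finset.mem_image.mp hx
      have hex : ∃ b, (x, b) ∈ C := ⟨p.2, by rw [← hpx]; simpa using hp⟩
      have hch := Classical.choose_spec hex
      have := hfal _ hch
      simp only [hg, dif_pos hex]
      exact this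
    · intro hfor p hp
      have hx : p.1 ∈ C.image Prod.fst := Finset.mem_image_of_mem _ hp
      have hex : ∃ b, (p.1, b) ∈ C := ⟨p.2, by simpa using hp⟩
      have hch := Classical.choose_spec hex
      have heq : (p.1, Classical.choose hex) = p := hinj hch hp rfl
      have := hfor p.1 hx
      rw [this]
      simp only [hg, dif_pos hex]
      congr 1
      exact congrArg Prod.snd heq
  rw [Finset.filter_congr (fun τ _ => by rw [key τ])]
  rw [card_forced, himg]

lemma countP_semicomplete {n r : ℕ} {G : Multiset (Finset (Fin n × Bool))}
    (hG : Semicomplete r G) (τ : Fin n → Bool) :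
    G.countP (Sat τ) = 2 ^ r - 1 := by
  obtain ⟨hcard, hnodup, hprop, hconf⟩ := hG
  set 𝒢 : Finset (Finset (Fin n × Bool)) := ⟨G, hnodup⟩ with h𝒢
  have h𝒢card : 𝒢.card = 2 ^ r := hcard
  -- r ≤ n
  have hGne : ∃ C, C ∈ G := by
    rw [← Multiset.card_pos_iff_exists_mem, hcard]
    positivity
  obtain ⟨C₀, hC₀⟩ := hGne
  have hrn : r ≤ n := by
    have := (hprop C₀ hC₀).2
    calc r = (C₀.image Prod.fst).card := this.symm
      _ ≤ (Finset.univ : Finset (Fin n)).card := Finset.card_le_card (Finset.subset_univ _)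
      _ = n := by simp
  -- uniqueness of falsified clause
  have huniq : ∀ (σ : Fin n → Bool), ∀ C ∈ G, ∀ D ∈ G, Falsifies σ C → Falsifies σ D → C = D := by
    intro σ C hC D hD hfC hfD
    by_contra hne
    obtain ⟨p, hp, hpD⟩ := hconf C hC D hD hne
    have h1 := hfC p hp
    have h2 := hfD _ hpD
    simp only at h2
    rw [h1] at h2
    simp at h2
  -- existence: counting
  have hdisj : ∀ C ∈ 𝒢, ∀ D ∈ 𝒢, C ≠ D →
      Disjoint (Finset.univ.filter fun σ : Fin n → Bool => Falsifies σ C)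
        (Finset.univ.filter fun σ : Fin n → Bool => Falsifies σ D) := by
    intro C hC D hD hne
    rw [Finset.disjoint_left]
    intro σ h1 h2
    simp only [Finset.mem_filter] at h1 h2
    exact hne (huniq σ C hC D hD h1.2 h2.2)
  have hbi : (𝒢.biUnion fun C => Finset.univ.filter fun σ : Fin n → Bool => Falsifies σ C)
      = Finset.univ := by
    apply Finset.eq_univ_of_card
    rw [Finset.card_biUnion hdisj]
    have : ∀ C ∈ 𝒢, (Finset.univ.filter fun σ : Fin n → Bool => Falsifies σ C).card
        = 2 ^ (n - r) := fun C hC => card_falsifies (hprop C hC)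
    rw [Finset.sum_congr rfl this, Finset.sum_const, h𝒢card]
    simp only [smul_eq_mul, ← pow_add]
    rw [Nat.add_sub_cancel' hrn]
    simp [Fintype.card_fun]
  have hex : ∃ C ∈ 𝒢, Falsifies τ C := by
    have : τ ∈ (𝒢.biUnion fun C => Finset.univ.filter fun σ : Fin n → Bool => Falsifies σ C) := by
      rw [hbi]; exact Finset.mem_univ τ
    simpa using this
  obtain ⟨C₁, hC₁, hfC₁⟩ := hex
  have hfilter : (𝒢.filter fun C => ¬ Sat τ C) = {C₁} := by
    rw [Finset.eq_singleton_iff_unique_mem]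
    constructor
    · rw [Finset.mem_filter]
      exact ⟨hC₁, (not_sat_iff τ C₁).mpr hfC₁⟩
    · intro C hC
      rw [Finset.mem_filter, not_sat_iff] at hC
      exact huniq τ C hC.1 C₁ hC₁ hC.2 hfC₁
  have h1 : G.countP (Sat τ) = (𝒢.filter fun C => Sat τ C).card := by
    rw [Multiset.countP_eq_card_filter]; rfl
  have h2 : (𝒢.filter fun C => Sat τ C).card + (𝒢.filter fun C => ¬ Sat τ C).card = 𝒢.card :=
    Finset.card_filter_add_card_filter_not _
  rw [h1]
  rw [hfilter] at h2
  simp only [Finset.card_singleton] at h2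
  omega

lemma countP_listsum {n r : ℕ} (Gs : List (Multiset (Finset (Fin n × Bool))))
    (h : ∀ G ∈ Gs, Semicomplete r G) (τ : Fin n → Bool) :
    (Gs.sum).countP (Sat τ) = Gs.length * (2 ^ r - 1) := by
  induction Gs with
  | nil => simp
  | cons G Gs ih =>
    simp only [List.sum_cons, Multiset.countP_add, List.length_cons]
    rw [countP_semicomplete (h G (by simp)) τ, ih (fun G' hG' => h G' (by simp [hG']))]
    ring

lemma card_listsum {n r : ℕ} (Gs : List (Multiset (Finset (Fin n × Bool))))
    (h : ∀ G ∈ Gs, Semicomplete r G) :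
    Multiset.card Gs.sum = Gs.length * 2 ^ r := by
  induction Gs with
  | nil => simp
  | cons G Gs ih =>
    simp only [List.sum_cons, Multiset.card_add, List.length_cons]
    rw [(h G (by simp)).1, ih (fun G' hG' => h G' (by simp [hG']))]
    ring

/-- Let `F` be an `r`-CNF formula and let `F'` (the paper's `F^S`) be obtained from `F`
by repeatedly deleting semicomplete subsets.  Then
`sat(F) − sat(F') = (1 − 2^{−r})·(|F| − |F'|)`. -/
theorem stmt_9 (n r : ℕ) (F F' : Multiset (Finset (Fin n × Bool)))
    (hF : ∀ C ∈ F, ProperClause r C)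
    (Gs : List (Multiset (Finset (Fin n × Bool))))
    (hGs : ∀ G ∈ Gs, Semicomplete r G)
    (hdecomp : F = F' + Gs.sum) :
    (maxSat F : ℝ) - maxSat F' = (1 - (1 / 2) ^ r) * ((F.card : ℝ) - F'.card) := by
  set k := Gs.length with hk
  have hcount : ∀ τ : Fin n → Bool,
      F.countP (Sat τ) = F'.countP (Sat τ) + k * (2 ^ r - 1) := by
    intro τ
    rw [hdecomp, Multiset.countP_add, countP_listsum Gs hGs τ]
  have hmax : maxSat F = maxSat F' + k * (2 ^ r - 1) := by
    unfold maxSat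
    apply le_antisymm
    · apply Finset.sup_le
      intro τ _
      rw [hcount τ]
      exact Nat.add_le_add_right (Finset.le_sup (f := fun τ : Fin n → Bool => F'.countP (Sat τ)) (Finset.mem_univ τ)) _
    · obtain ⟨τ₀, _, hτ₀⟩ := Finset.exists_mem_eq_sup Finset.univ
        (Finset.univ_nonempty) (fun τ : Fin n → Bool => F'.countP (Sat τ))
      rw [hτ₀, ← hcount τ₀]
      exact Finset.le_sup (f := fun τ : Fin n → Bool => F.countP (Sat τ)) (Finset.mem_univ τ₀)
  have hcard : Multiset.card F = Multiset.card F' + k * 2 ^ r := by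
    rw [hdecomp, Multiset.card_add, card_listsum Gs hGs]
  have h2r : (1:ℕ) ≤ 2 ^ r := Nat.one_le_two_pow
  have hinv : ((1:ℝ)/2) ^ r * 2 ^ r = 1 := by
    rw [← mul_pow]; norm_num
  rw [hmax, hcard]
  push_cast [h2r]
  ring_nf
  nlinarith [hinv]
end

section
/- Let F be a 2-CNF formula with m clauses in variables x₁,…,xₙ and let R = {x₁,…,x_q} be a set of variables. Then sat(F) ≥ (3m + k_R)/4, where k_R = Σ_{1≤i≤q} (c(x_i) − c(x̄_i)) + Σ_{1≤i<j≤q} (c(x_i x̄_j) + c(x̄_i x_j) − c(x_i x_j) − c(x̄_i x̄_j)); here c(ℓ) is the number of clauses containing literal ℓ, and c(ℓℓ') is the number of occurrences of the clause {ℓ,ℓ'} in F. -/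
open scoped Classical

/-- A clause is a proper 2-clause if it has exactly 2 literals on 2 distinct variables
(a literal is a variable together with a polarity, `true` = positive). -/
def ProperClause2 {n : ℕ} (C : Finset (Fin n × Bool)) : Prop :=
  C.card = 2 ∧ (C.image Prod.fst).card = 2

lemma countP_eq_sum {α : Type*} (F : Multiset α) (p : α → Prop) [DecidablePred p] :
    ((F.countP p : ℤ)) = (F.map (fun C => if p C then (1:ℤ) else 0)).sum := by
  induction F using Multiset.induction with
  | empty => simp
  | cons a s ih => by_cases h : p a <;> simp [h, ih, Multiset.countP_cons, add_comm]

lemma swap_sum {α β : Type*} (F : Multiset α) (s : Finset β) (f : β → α → ℤ) :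
    ∑ i ∈ s, (F.map (f i)).sum = (F.map (fun C => ∑ i ∈ s, f i C)).sum := by
  induction F using Multiset.induction with
  | empty => simp
  | cons a t ih => simp [ih, Finset.sum_add_distrib]

lemma finset_pair_eq {α : Type*} [DecidableEq α] (a b c d : α) :
    ({a,b} : Finset α) = {c,d} ↔ (a = c ∧ b = d) ∨ (a = d ∧ b = c) := by
  rw [← Finset.coe_inj]; push_cast; exact Set.pair_eq_pair_iff

lemma sum_eval_two {ι : Type*} [Fintype ι] [DecidableEq ι] (a c : ι) (h : c ≠ a)
    (f : Bool → Bool → ℤ) :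
    (4:ℤ) * ∑ σ : ι → Bool, f (σ a) (σ c)
      = (Fintype.card (ι → Bool) : ℤ) * ∑ u : Bool, ∑ v : Bool, f u v := by
  classical
  set c' : {j // j ≠ a} := ⟨c, h⟩
  have e1 : ∑ σ : ι → Bool, f (σ a) (σ c)
      = ∑ x : Bool × ({j // j ≠ a} → Bool), f x.1 (x.2 c') :=
    Fintype.sum_equiv (Equiv.funSplitAt a Bool) _ _ (fun σ => by simp [c'])
  have e2 : ∀ u : Bool, ∑ g : {j // j ≠ a} → Bool, f u (g c')
      = ∑ y : Bool × ({j // j ≠ c'} → Bool), f u y.1 :=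
    fun u => Fintype.sum_equiv (Equiv.funSplitAt c' Bool) _ _ (fun g => by simp)
  have e3 : ∀ u : Bool, ∑ y : Bool × ({j // j ≠ c'} → Bool), f u y.1
      = (Fintype.card ({j // j ≠ c'} → Bool) : ℤ) * ∑ v : Bool, f u v := by
    intro u
    rw [Fintype.sum_prod_type]
    simp [Finset.sum_const]
    ring
  have ecard : (Fintype.card (ι → Bool) : ℤ)
      = 4 * (Fintype.card ({j // j ≠ c'} → Bool) : ℤ) := by
    have h1 : Fintype.card (ι → Bool)
        = 2 * (2 * Fintype.card ({j // j ≠ c'} → Bool)) := by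
      rw [Fintype.card_congr
        ((Equiv.funSplitAt a Bool).trans
          ((Equiv.refl Bool).prodCongr (Equiv.funSplitAt c' Bool))),
        Fintype.card_prod, Fintype.card_prod, Fintype.card_bool]
    push_cast [h1]; ring
  rw [e1, Fintype.sum_prod_type]
  simp_rw [e2, e3]
  rw [ecard, Finset.mul_sum, Finset.mul_sum]
  refine Finset.sum_congr rfl fun u _ => by ring

lemma pair_pt {n : ℕ} (a c : Fin n) (hac : a ≠ c) (b1 b2 : Bool) (T : ℤ)
    (hT : T = if b1 = b2 then -1 else 1) (i j : Fin n) :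
    (if i < j then
        ((if ({(i,true),(j,false)} : Finset (Fin n × Bool)) = {(a,b1),(c,b2)} then (1:ℤ) else 0)
         + (if ({(i,false),(j,true)} : Finset (Fin n × Bool)) = {(a,b1),(c,b2)} then (1:ℤ) else 0)
         - (if ({(i,true),(j,true)} : Finset (Fin n × Bool)) = {(a,b1),(c,b2)} then (1:ℤ) else 0)
         - (if ({(i,false),(j,false)} : Finset (Fin n × Bool)) = {(a,b1),(c,b2)} then (1:ℤ) else 0))
      else 0)
    = (if i = a ∧ j = c ∧ a < c then T else 0)
      + (if i = c ∧ j = a ∧ c < a then T else 0) := by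
  have e1 : ∀ u v : Bool, (if ({(i,u),(j,v)} : Finset (Fin n × Bool)) = {(a,b1),(c,b2)} then (1:ℤ) else 0)
      = if ((i = a ∧ u = b1 ∧ j = c ∧ v = b2) ∨ (i = c ∧ u = b2 ∧ j = a ∧ v = b1)) then 1 else 0 := by
    intro u v
    refine if_congr ?_ rfl rfl
    rw [finset_pair_eq]
    simp only [Prod.ext_iff]
    tauto
  by_cases hlt : i < j
  · have hij : i ≠ j := ne_of_lt hlt
    simp only [if_pos hlt, e1]
    by_cases hia : i = a
    · have hic : ¬ i = c := by rw [hia]; exact hac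
      by_cases hjc : j = c
      · have hja : ¬ j = a := by rw [hjc]; exact hac.symm
        have hlt2 : a < c := by rw [← hia, ← hjc]; exact hlt
        simp only [hia, hjc, hic, hja, hlt2, true_and, and_true, false_and, if_false,
          or_false, if_true, lt_self_iff_false, and_false]
        cases b1 <;> cases b2 <;> simp [hT, hac] <;> ring
      · simp only [hjc, hic, false_and, and_false, or_false, false_or, if_false,
          and_true, true_and]
        simp
    · by_cases hic : i = c
      · by_cases hja : j = a
        · have hlt3 : c < a := by rw [← hic, ← hja]; exact hlt
          have hjc' : ¬ j = c := by rw [hja]; exact hac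
          simp only [hia, hic, hja, hjc', hlt3, true_and, and_true, false_and, if_false,
            or_false, false_or, if_true, lt_self_iff_false, and_false]
          cases b1 <;> cases b2 <;> simp [hT, hac] <;> ring
        · simp [hia, hja]
      · simp [hia, hic]
  · have h1 : ¬(i = a ∧ j = c ∧ a < c) := by
      rintro ⟨rfl, rfl, h⟩; exact hlt h
    have h2 : ¬(i = c ∧ j = a ∧ c < a) := by
      rintro ⟨rfl, rfl, h⟩; exact hlt h
    simp [hlt, h1, h2]

lemma per_clause {n : ℕ} (R : Finset (Fin n)) (a c : Fin n) (hac : a ≠ c) (b1 b2 : Bool) :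
    ∑ σ : Fin n → Bool, (4:ℤ) *
        (if Sat (fun i => if i ∈ R then true else σ i)
            ({(a,b1),(c,b2)} : Finset (Fin n × Bool)) then 1 else 0)
      = (2^n : ℤ) * ((3 : ℤ)
          + (∑ i ∈ R, ((if (i,true) ∈ ({(a,b1),(c,b2)} : Finset (Fin n × Bool)) then (1:ℤ) else 0)
              - (if (i,false) ∈ ({(a,b1),(c,b2)} : Finset (Fin n × Bool)) then (1:ℤ) else 0)))
          + ∑ i ∈ R, ∑ j ∈ R, (if i < j then
              ((if ({(i,true),(j,false)} : Finset (Fin n × Bool)) = {(a,b1),(c,b2)} then (1:ℤ) else 0)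
               + (if ({(i,false),(j,true)} : Finset (Fin n × Bool)) = {(a,b1),(c,b2)} then (1:ℤ) else 0)
               - (if ({(i,true),(j,true)} : Finset (Fin n × Bool)) = {(a,b1),(c,b2)} then (1:ℤ) else 0)
               - (if ({(i,false),(j,false)} : Finset (Fin n × Bool)) = {(a,b1),(c,b2)} then (1:ℤ) else 0))
            else 0)) := by
  classical
  set g : Bool → Bool → ℤ := fun u v =>
    if ((if a ∈ R then true else u) = b1 ∨ (if c ∈ R then true else v) = b2) then 1 else 0
    with hg
  set T : ℤ := if b1 = b2 then -1 else 1 with hT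
  have step1 : ∑ σ : Fin n → Bool, (4:ℤ) *
        (if Sat (fun i => if i ∈ R then true else σ i)
            ({(a,b1),(c,b2)} : Finset (Fin n × Bool)) then 1 else 0)
      = (2^n : ℤ) * ∑ u : Bool, ∑ v : Bool, g u v := by
    rw [← Finset.mul_sum]
    have hpt : ∀ σ : Fin n → Bool,
        (if Sat (fun i => if i ∈ R then true else σ i)
            ({(a,b1),(c,b2)} : Finset (Fin n × Bool)) then (1:ℤ) else 0) = g (σ a) (σ c) := by
      intro σ
      rw [hg]
      exact if_congr (by simp [Sat]) rfl rfl
    rw [Finset.sum_congr rfl (fun σ _ => hpt σ), sum_eval_two a c hac.symm g]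
    congr 1
    rw [Fintype.card_fun]
    push_cast
    simp
  have litsum : (∑ i ∈ R, ((if (i,true) ∈ ({(a,b1),(c,b2)} : Finset (Fin n × Bool)) then (1:ℤ) else 0)
              - (if (i,false) ∈ ({(a,b1),(c,b2)} : Finset (Fin n × Bool)) then (1:ℤ) else 0)))
      = (if a ∈ R then (if b1 then (1:ℤ) else -1) else 0)
        + (if c ∈ R then (if b2 then (1:ℤ) else -1) else 0) := by
    have hpt : ∀ i : Fin n,
        ((if (i,true) ∈ ({(a,b1),(c,b2)} : Finset (Fin n × Bool)) then (1:ℤ) else 0)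
          - (if (i,false) ∈ ({(a,b1),(c,b2)} : Finset (Fin n × Bool)) then (1:ℤ) else 0))
        = (if i = a then (if b1 then (1:ℤ) else -1) else 0)
          + (if i = c then (if b2 then (1:ℤ) else -1) else 0) := by
      intro i
      by_cases hia : i = a
      · subst hia; simp [Finset.mem_insert, Prod.ext_iff, hac]; cases b1 <;> simp
      · by_cases hic : i = c
        · subst hic; simp [Finset.mem_insert, Prod.ext_iff, hia]; cases b2 <;> simp
        · simp [Finset.mem_insert, Prod.ext_iff, hia, hic]
    rw [Finset.sum_congr rfl (fun i _ => hpt i), Finset.sum_add_distrib,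
      Finset.sum_ite_eq' R a, Finset.sum_ite_eq' R c]
  have pairsum : (∑ i ∈ R, ∑ j ∈ R, (if i < j then
              ((if ({(i,true),(j,false)} : Finset (Fin n × Bool)) = {(a,b1),(c,b2)} then (1:ℤ) else 0)
               + (if ({(i,false),(j,true)} : Finset (Fin n × Bool)) = {(a,b1),(c,b2)} then (1:ℤ) else 0)
               - (if ({(i,true),(j,true)} : Finset (Fin n × Bool)) = {(a,b1),(c,b2)} then (1:ℤ) else 0)
               - (if ({(i,false),(j,false)} : Finset (Fin n × Bool)) = {(a,b1),(c,b2)} then (1:ℤ) else 0))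
            else 0))
      = (if a ∈ R then (if c ∈ R then (if a < c then T else 0) else 0) else 0)
        + (if c ∈ R then (if a ∈ R then (if c < a then T else 0) else 0) else 0) := by
    have hnest : ∀ i j : Fin n,
        ((if i = a ∧ j = c ∧ a < c then T else 0) + (if i = c ∧ j = a ∧ c < a then T else 0))
        = (if i = a then (if j = c then (if a < c then T else 0) else 0) else 0)
          + (if i = c then (if j = a then (if c < a then T else 0) else 0) else 0) := by
      intro i j
      congr 1
      · by_cases h1 : i = a <;> by_cases h2 : j = c <;> by_cases h3 : a < c <;>
          simp [h1, h2, h3]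
      · by_cases h1 : i = c <;> by_cases h2 : j = a <;> by_cases h3 : c < a <;>
          simp [h1, h2, h3]
    have hrow : ∀ i : Fin n, ∑ j ∈ R,
        ((if i = a then (if j = c then (if a < c then T else 0) else 0) else 0)
          + (if i = c then (if j = a then (if c < a then T else 0) else 0) else 0))
        = (if i = a then (if c ∈ R then (if a < c then T else 0) else 0) else 0)
          + (if i = c then (if a ∈ R then (if c < a then T else 0) else 0) else 0) := by
      intro i
      rw [Finset.sum_add_distrib]
      congr 1
      · by_cases hia : i = a <;> simp [hia, Finset.sum_ite_eq' R c]
      · by_cases hic : i = c <;> simp [hic, Finset.sum_ite_eq' R a]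
    rw [Finset.sum_congr rfl (fun i _ => Finset.sum_congr rfl
      (fun j _ => pair_pt a c hac b1 b2 T hT i j))]
    rw [Finset.sum_congr rfl (fun i _ => (Finset.sum_congr rfl
      (fun j _ => hnest i j)).trans (hrow i)), Finset.sum_add_distrib,
      Finset.sum_ite_eq' R a, Finset.sum_ite_eq' R c]
  rw [step1, litsum, pairsum]
  congr 1
  rcases lt_or_gt_of_ne hac with hlt | hlt
  · have hlt' : ¬ c < a := not_lt_of_gt hlt
    by_cases ha : a ∈ R <;> by_cases hc : c ∈ R <;>
      cases b1 <;> cases b2 <;>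
      simp only [hg, hT, Fintype.sum_bool, ha, hc, hlt, hlt', if_true, if_false] <;>
      norm_num
  · have hlt' : ¬ a < c := not_lt_of_gt hlt
    by_cases ha : a ∈ R <;> by_cases hc : c ∈ R <;>
      cases b1 <;> cases b2 <;>
      simp only [hg, hT, Fintype.sum_bool, ha, hc, hlt, hlt', if_true, if_false] <;>
      norm_num

/-- `cLit F ℓ` is the number of clauses of `F` containing the literal `ℓ`. -/
noncomputable def cLit {n : ℕ} (F : Multiset (Finset (Fin n × Bool)))
    (ℓ : Fin n × Bool) : ℕ :=
  F.countP fun C => ℓ ∈ C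

/-- `cCl F ℓ ℓ'` is the number of occurrences of the clause `{ℓ, ℓ'}` in `F`. -/
def cCl {n : ℕ} (F : Multiset (Finset (Fin n × Bool))) (ℓ ℓ' : Fin n × Bool) : ℕ :=
  F.count {ℓ, ℓ'}

/-- Let `F` be a 2-CNF formula with `m` clauses and let `R` be a set of variables.
Then `sat(F) ≥ (3m + k_R)/4`, where
`k_R = Σ_{i∈R} (c(x_i) − c(x̄_i)) + Σ_{i<j∈R} (c(x_i x̄_j) + c(x̄_i x_j) − c(x_i x_j) − c(x̄_i x̄_j))`. -/
theorem stmt_10 (n : ℕ) (F : Multiset (Finset (Fin n × Bool)))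
    (hF : ∀ C ∈ F, ProperClause2 C) (R : Finset (Fin n)) :
    ((3 * F.card : ℝ) +
      ((∑ i ∈ R, ((cLit F (i, true) : ℤ) - cLit F (i, false)))
        + ∑ i ∈ R, ∑ j ∈ R,
            if i < j then
              ((cCl F (i, true) (j, false) : ℤ) + cCl F (i, false) (j, true)
                - cCl F (i, true) (j, true) - cCl F (i, false) (j, false))
            else 0 : ℤ)) / 4
      ≤ (maxSat F : ℝ) := by
  classical
  -- notation
  set m := F.card with hm
  set K : ℤ := ((∑ i ∈ R, ((cLit F (i, true) : ℤ) - cLit F (i, false)))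
        + ∑ i ∈ R, ∑ j ∈ R,
            if i < j then
              ((cCl F (i, true) (j, false) : ℤ) + cCl F (i, false) (j, true)
                - cCl F (i, true) (j, true) - cCl F (i, false) (j, false))
            else 0) with hK
  -- the per-clause weight
  have key : (2^n : ℤ) * ((3 * m : ℤ) + K)
      = ∑ σ : Fin n → Bool, 4 *
          ((F.countP (Sat (fun i => if i ∈ R then true else σ i))) : ℤ) := by
    have hcountP : ∀ σ : Fin n → Bool,
        ((F.countP (Sat (fun i => if i ∈ R then true else σ i))) : ℤ)
        = (F.map (fun C => if Sat (fun i => if i ∈ R then true else σ i) C then (1:ℤ) else 0)).sum :=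
      fun σ => countP_eq_sum F _
    have step1 : ∑ σ : Fin n → Bool, 4 *
          ((F.countP (Sat (fun i => if i ∈ R then true else σ i))) : ℤ)
        = (F.map (fun C => ∑ σ : Fin n → Bool, (4:ℤ) *
            (if Sat (fun i => if i ∈ R then true else σ i) C then 1 else 0))).sum := by
      rw [Finset.sum_congr rfl (fun σ _ => by rw [hcountP σ, ← Multiset.sum_map_mul_left])]
      exact swap_sum F Finset.univ _
    have step2 : (F.map (fun C => ∑ σ : Fin n → Bool, (4:ℤ) *
            (if Sat (fun i => if i ∈ R then true else σ i) C then 1 else 0))).sum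
        = (F.map (fun C => (2^n : ℤ) * ((3 : ℤ)
            + (∑ i ∈ R, ((if (i,true) ∈ C then (1:ℤ) else 0)
                - (if (i,false) ∈ C then (1:ℤ) else 0)))
            + ∑ i ∈ R, ∑ j ∈ R, (if i < j then
                ((if ({(i,true),(j,false)} : Finset (Fin n × Bool)) = C then (1:ℤ) else 0)
                 + (if ({(i,false),(j,true)} : Finset (Fin n × Bool)) = C then (1:ℤ) else 0)
                 - (if ({(i,true),(j,true)} : Finset (Fin n × Bool)) = C then (1:ℤ) else 0)
                 - (if ({(i,false),(j,false)} : Finset (Fin n × Bool)) = C then (1:ℤ) else 0))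
              else 0)))).sum := by
      refine congrArg Multiset.sum (Multiset.map_congr rfl ?_)
      intro C hC
      obtain ⟨hcard, himg⟩ := hF C hC
      obtain ⟨p, q, hpq, rfl⟩ := Finset.card_eq_two.mp hcard
      obtain ⟨a, b1⟩ := p
      obtain ⟨c, b2⟩ := q
      have hac : a ≠ c := by
        intro h
        subst h
        simp [Finset.image_insert] at himg
      exact per_clause R a c hac b1 b2
    have step3 : (F.map (fun C => (2^n : ℤ) * ((3 : ℤ)
            + (∑ i ∈ R, ((if (i,true) ∈ C then (1:ℤ) else 0)
                - (if (i,false) ∈ C then (1:ℤ) else 0)))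
            + ∑ i ∈ R, ∑ j ∈ R, (if i < j then
                ((if ({(i,true),(j,false)} : Finset (Fin n × Bool)) = C then (1:ℤ) else 0)
                 + (if ({(i,false),(j,true)} : Finset (Fin n × Bool)) = C then (1:ℤ) else 0)
                 - (if ({(i,true),(j,true)} : Finset (Fin n × Bool)) = C then (1:ℤ) else 0)
                 - (if ({(i,false),(j,false)} : Finset (Fin n × Bool)) = C then (1:ℤ) else 0))
              else 0)))).sum
        = (2^n : ℤ) * ((3 * m : ℤ) + K) := by
      rw [Multiset.sum_map_mul_left]
      congr 1
      have e0 : ∀ C : Finset (Fin n × Bool), (3 : ℤ)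
            + (∑ i ∈ R, ((if (i,true) ∈ C then (1:ℤ) else 0)
                - (if (i,false) ∈ C then (1:ℤ) else 0)))
            + (∑ i ∈ R, ∑ j ∈ R, (if i < j then
                ((if ({(i,true),(j,false)} : Finset (Fin n × Bool)) = C then (1:ℤ) else 0)
                 + (if ({(i,false),(j,true)} : Finset (Fin n × Bool)) = C then (1:ℤ) else 0)
                 - (if ({(i,true),(j,true)} : Finset (Fin n × Bool)) = C then (1:ℤ) else 0)
                 - (if ({(i,false),(j,false)} : Finset (Fin n × Bool)) = C then (1:ℤ) else 0))
              else 0)) = _ := fun C => rfl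
      rw [show (fun C => (3 : ℤ)
            + (∑ i ∈ R, ((if (i,true) ∈ C then (1:ℤ) else 0)
                - (if (i,false) ∈ C then (1:ℤ) else 0)))
            + ∑ i ∈ R, ∑ j ∈ R, (if i < j then
                ((if ({(i,true),(j,false)} : Finset (Fin n × Bool)) = C then (1:ℤ) else 0)
                 + (if ({(i,false),(j,true)} : Finset (Fin n × Bool)) = C then (1:ℤ) else 0)
                 - (if ({(i,true),(j,true)} : Finset (Fin n × Bool)) = C then (1:ℤ) else 0)
                 - (if ({(i,false),(j,false)} : Finset (Fin n × Bool)) = C then (1:ℤ) else 0))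
              else 0)) = (fun C => ((fun C => (3:ℤ)) C + ((fun C =>
              (∑ i ∈ R, ((if (i,true) ∈ C then (1:ℤ) else 0)
                - (if (i,false) ∈ C then (1:ℤ) else 0)))) C +
              (fun C => ∑ i ∈ R, ∑ j ∈ R, (if i < j then
                ((if ({(i,true),(j,false)} : Finset (Fin n × Bool)) = C then (1:ℤ) else 0)
                 + (if ({(i,false),(j,true)} : Finset (Fin n × Bool)) = C then (1:ℤ) else 0)
                 - (if ({(i,true),(j,true)} : Finset (Fin n × Bool)) = C then (1:ℤ) else 0)
                 - (if ({(i,false),(j,false)} : Finset (Fin n × Bool)) = C then (1:ℤ) else 0))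
              else 0)) C))) from by funext C; ring]
      rw [Multiset.sum_map_add, Multiset.sum_map_add]
      have h3 : ((F.map (fun C => (3:ℤ))).sum) = 3 * m := by
        simp [Multiset.map_const', Multiset.sum_replicate, hm]
        ring
      have hlit : (F.map (fun C =>
            (∑ i ∈ R, ((if (i,true) ∈ C then (1:ℤ) else 0)
              - (if (i,false) ∈ C then (1:ℤ) else 0))))).sum
          = ∑ i ∈ R, ((cLit F (i, true) : ℤ) - cLit F (i, false)) := by
        rw [← swap_sum]
        refine Finset.sum_congr rfl fun i _ => ?_
        rw [Multiset.sum_map_sub]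
        rw [cLit, cLit, countP_eq_sum, countP_eq_sum]
      have hpair : (F.map (fun C => ∑ i ∈ R, ∑ j ∈ R, (if i < j then
                ((if ({(i,true),(j,false)} : Finset (Fin n × Bool)) = C then (1:ℤ) else 0)
                 + (if ({(i,false),(j,true)} : Finset (Fin n × Bool)) = C then (1:ℤ) else 0)
                 - (if ({(i,true),(j,true)} : Finset (Fin n × Bool)) = C then (1:ℤ) else 0)
                 - (if ({(i,false),(j,false)} : Finset (Fin n × Bool)) = C then (1:ℤ) else 0))
              else 0))).sum
          = ∑ i ∈ R, ∑ j ∈ R,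
            if i < j then
              ((cCl F (i, true) (j, false) : ℤ) + cCl F (i, false) (j, true)
                - cCl F (i, true) (j, true) - cCl F (i, false) (j, false))
            else 0 := by
        rw [← swap_sum]
        refine Finset.sum_congr rfl fun i _ => ?_
        rw [← swap_sum]
        refine Finset.sum_congr rfl fun j _ => ?_
        by_cases hij : i < j
        · simp only [if_pos hij]
          have hc : ∀ ℓ ℓ' : Fin n × Bool, (cCl F ℓ ℓ' : ℤ)
              = (F.map (fun C => if ({ℓ,ℓ'} : Finset (Fin n × Bool)) = C then (1:ℤ) else 0)).sum := by
            intro ℓ ℓ'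
            rw [cCl]
            exact countP_eq_sum F _
          rw [hc, hc, hc, hc, ← Multiset.sum_map_add, ← Multiset.sum_map_sub,
            ← Multiset.sum_map_sub]
        · simp only [if_neg hij]
          simp
      simp only [h3, hlit, hpair, hK]
      try ring
    rw [step1, step2, step3]
  -- bound each assignment by maxSat
  have hbound : ∑ σ : Fin n → Bool, 4 *
          ((F.countP (Sat (fun i => if i ∈ R then true else σ i))) : ℤ)
      ≤ (2^n : ℤ) * (4 * (maxSat F : ℤ)) := by
    have h1 : ∀ σ : Fin n → Bool,
        (F.countP (Sat (fun i => if i ∈ R then true else σ i)) : ℤ) ≤ (maxSat F : ℤ) := by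
      intro σ
      have := Finset.le_sup (f := fun τ : Fin n → Bool => F.countP (Sat τ))
        (Finset.mem_univ (fun i => if i ∈ R then true else σ i))
      exact_mod_cast this
    have hstep : ∑ σ : Fin n → Bool, 4 *
          ((F.countP (Sat (fun i => if i ∈ R then true else σ i))) : ℤ)
        ≤ ∑ σ : Fin n → Bool, 4 * (maxSat F : ℤ) :=
      Finset.sum_le_sum fun σ _ =>
        mul_le_mul_of_nonneg_left (h1 σ) (by norm_num)
    have hconst : ∑ σ : Fin n → Bool, 4 * (maxSat F : ℤ)
        = (2^n : ℤ) * (4 * (maxSat F : ℤ)) := by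
      rw [Finset.sum_const, Finset.card_univ, Fintype.card_fun, nsmul_eq_mul]
      simp
    rw [← hconst]
    exact hstep
  have hineq : (3 * m : ℤ) + K ≤ 4 * (maxSat F : ℤ) := by
    have h2 : (0:ℤ) < 2^n := by positivity
    have := key.le.trans hbound
    exact le_of_mul_le_mul_left this h2
  rw [div_le_iff₀ (by norm_num : (0:ℝ) < 4)]
  have : ((3 * m : ℤ) + K : ℝ) ≤ ((4 * (maxSat F : ℤ) : ℤ) : ℝ) := by exact_mod_cast hineq
  push_cast at this ⊢
  linarith
end

section
/- Let F be a 2-CNF formula with F = F^S (i.e., F contains no semicomplete subset of 4 pairwise-conflicting clauses). A variable x of F is insignificant (for every literal y, the clauses xy and x̄y occur the same number of times in F) if and only if x is an isolated vertex in the graph G⁰ and w(x) = 0, where G⁰ has vertex set var(F), an edge between x and y of weight w(xy) = c(xȳ) + c(x̄y) − c(xy) − c(x̄ȳ) whenever this weight is nonzero and some clause of F is on variables {x,y}, and w(x) = c(x) − c(x̄). -/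
open scoped Classical

/-- A sub-multiset of clauses is semicomplete if it consists of `4 = 2²` distinct
clauses every pair of which has a conflict. -/
def Semicomplete2 {n : ℕ} (G : Multiset (Finset (Fin n × Bool))) : Prop :=
  G.card = 4 ∧ G.Nodup ∧ ∀ C ∈ G, ∀ D ∈ G, C ≠ D → ∃ p ∈ C, (p.1, !p.2) ∈ D

/-- The weight `w(xy) = c(xȳ) + c(x̄y) − c(xy) − c(x̄ȳ)` of a pair of variables. -/
noncomputable def edgeW {n : ℕ} (F : Multiset (Finset (Fin n × Bool)))
    (x y : Fin n) : ℤ :=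
  (cCl F (x, true) (y, false) : ℤ) + cCl F (x, false) (y, true)
    - cCl F (x, true) (y, true) - cCl F (x, false) (y, false)

/-- The weight `w(x) = c(x) − c(x̄)` of a variable. -/
noncomputable def vertW {n : ℕ} (F : Multiset (Finset (Fin n × Bool))) (x : Fin n) : ℤ :=
  (cLit F (x, true) : ℤ) - cLit F (x, false)

/-- A variable `x` is insignificant if for each literal `y` the clauses `xy` and `x̄y`
occur the same number of times in `F`. -/
def Insignificant {n : ℕ} (F : Multiset (Finset (Fin n × Bool))) (x : Fin n) : Prop :=
  ∀ (j : Fin n) (b : Bool), j ≠ x → cCl F (x, true) (j, b) = cCl F (x, false) (j, b)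

/-- If `ℓ ≠ w` then `{ℓ, m} = {ℓ, w}` iff `m = w`. -/
lemma pair_eq_pair_iff' {α : Type*} [DecidableEq α] {ℓ w : α} (hw : ℓ ≠ w) (m : α) :
    ({ℓ, m} : Finset α) = {ℓ, w} ↔ m = w := by
  constructor
  · intro h
    have hm : m ∈ ({ℓ, w} : Finset α) := by rw [← h]; simp
    rw [Finset.mem_insert, Finset.mem_singleton] at hm
    rcases hm with rfl | rfl
    · exfalso
      have hv : w ∈ ({m, m} : Finset α) := by rw [h]; simp
      simp at hv
      exact hw hv.symm
    · rfl
  · rintro rfl; rfl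

lemma sum_indicator_pair {α : Type*} [Fintype α] [DecidableEq α] {ℓ w : α} (hw : ℓ ≠ w) :
    (∑ m : α, if ({ℓ, m} : Finset α) = {ℓ, w} then 1 else 0) = 1 := by
  have : ∀ m : α, (if ({ℓ, m} : Finset α) = {ℓ, w} then 1 else 0)
      = (if m = w then 1 else 0) := by
    intro m; exact if_congr (pair_eq_pair_iff' hw m) rfl rfl
  simp [this]

/-- Counting clauses containing a literal as a sum over the possible partner. -/
lemma cLit_eq_sum {n : ℕ} (F : Multiset (Finset (Fin n × Bool)))
    (hF : ∀ C ∈ F, ProperClause2 C) (ℓ : Fin n × Bool) :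
    cLit F ℓ = ∑ m : Fin n × Bool, cCl F ℓ m := by
  induction F using Multiset.induction with
  | empty => simp [cLit, cCl]
  | cons C F ih =>
    have hC := hF C (Multiset.mem_cons_self _ _)
    have hF' : ∀ D ∈ F, ProperClause2 D := fun D hD => hF D (Multiset.mem_cons_of_mem hD)
    have hsum : ∀ m, cCl (C ::ₘ F) ℓ m
        = cCl F ℓ m + (if ({ℓ, m} : Finset _) = C then 1 else 0) := by
      intro m; simp [cCl, Multiset.count_cons]
    have hcl : cLit (C ::ₘ F) ℓ = cLit F ℓ + (if ℓ ∈ C then 1 else 0) := by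
      simp [cLit, Multiset.countP_cons]
    rw [hcl, ih hF']
    simp only [hsum, Finset.sum_add_distrib]
    congr 1
    by_cases hl : ℓ ∈ C
    · rw [if_pos hl]
      obtain ⟨u, v, huv, rfl⟩ := Finset.card_eq_two.mp hC.1
      rcases Finset.mem_insert.mp hl with rfl | hl'
      · exact (sum_indicator_pair huv).symm
      · have hl'' : ℓ = v := Finset.mem_singleton.mp hl'
        subst hl''
        rw [show ({u, ℓ} : Finset (Fin n × Bool)) = {ℓ, u} from Finset.pair_comm u ℓ]
        exact (sum_indicator_pair (Ne.symm huv)).symm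
    · rw [if_neg hl]
      refine (Finset.sum_eq_zero ?_).symm
      intro m _
      rw [if_neg]
      intro h
      exact hl (by rw [← h]; simp)

/-- Let `F` be a 2-CNF formula containing no semicomplete subset (`F = F^S`).  A
variable `x` is insignificant if and only if `x` is an isolated vertex of the graph
`G⁰` (every variable pair `{x,y}` carried by a clause of `F` has weight `w(xy) = 0`)
and `w(x) = 0`. -/
theorem stmt_12 (n : ℕ) (F : Multiset (Finset (Fin n × Bool)))
    (hF : ∀ C ∈ F, ProperClause2 C)
    (hS : ¬ ∃ G ≤ F, Semicomplete2 G)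
    (x : Fin n) :
    Insignificant F x ↔
      ((∀ y : Fin n, y ≠ x → (∃ C ∈ F, C.image Prod.fst = {x, y}) → edgeW F x y = 0)
        ∧ vertW F x = 0) := by
  -- clauses with both literals on the variable x do not occur
  have himp : ∀ b1 b2 : Bool, cCl F (x, b1) (x, b2) = 0 := by
    intro b1 b2
    rw [cCl, Multiset.count_eq_zero]
    intro hmem
    have h2 := (hF _ hmem).2
    have : ({(x, b1), (x, b2)} : Finset (Fin n × Bool)).image Prod.fst = {x} := by
      simp [Finset.image_insert]
    rw [this] at h2
    simp at h2
  have hVsum : vertW F x = ∑ j : Fin n,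
      ((cCl F (x, true) (j, true) : ℤ) + cCl F (x, true) (j, false)
        - cCl F (x, false) (j, true) - cCl F (x, false) (j, false)) := by
    rw [vertW, cLit_eq_sum F hF, cLit_eq_sum F hF]
    push_cast
    rw [← Finset.sum_sub_distrib]
    rw [Fintype.sum_prod_type]
    apply Finset.sum_congr rfl
    intro j _
    rw [Fintype.sum_bool]
    ring
  constructor
  · -- forward direction
    intro hins
    constructor
    · intro y hy _
      rw [edgeW, hins y true hy, hins y false hy]
      ring
    · rw [hVsum]
      apply Finset.sum_eq_zero
      intro j _
      by_cases hj : j = x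
      · subst hj; simp [himp]
      · rw [hins j true hj, hins j false hj]; ring
  · -- backward direction
    rintro ⟨hE, hV⟩
    -- every pair {x,j} has edge weight zero
    have hedge : ∀ j : Fin n, j ≠ x →
        (cCl F (x, true) (j, false) : ℤ) + cCl F (x, false) (j, true)
          - cCl F (x, true) (j, true) - cCl F (x, false) (j, false) = 0 := by
      intro j hj
      by_cases hex : ∃ C ∈ F, C.image Prod.fst = {x, j}
      · exact hE j hj hex
      · have hz : ∀ b1 b2 : Bool, cCl F (x, b1) (j, b2) = 0 := by
          intro b1 b2
          rw [cCl, Multiset.count_eq_zero]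
          intro hmem
          exact hex ⟨_, hmem, by simp [Finset.image_insert]⟩
        simp [hz]
    -- from hS: one of the two sides is "thin"
    have hdich : (∀ j : Fin n, cCl F (x, true) (j, true) = 0 ∨ cCl F (x, true) (j, false) = 0)
        ∨ (∀ j : Fin n, cCl F (x, false) (j, true) = 0 ∨ cCl F (x, false) (j, false) = 0) := by
      by_contra hcon
      push_neg at hcon
      obtain ⟨⟨j, hj1, hj2⟩, ⟨k, hk1, hk2⟩⟩ := hcon
      have hjx : j ≠ x := by
        rintro rfl; exact hj1 (himp true true)
      have hkx : k ≠ x := by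
        rintro rfl; exact hk1 (himp false true)
      apply hS
      set C1 : Finset (Fin n × Bool) := {(x, true), (j, true)} with hC1
      set C2 : Finset (Fin n × Bool) := {(x, true), (j, false)} with hC2
      set C3 : Finset (Fin n × Bool) := {(x, false), (k, true)} with hC3
      set C4 : Finset (Fin n × Bool) := {(x, false), (k, false)} with hC4
      have m1 : C1 ∈ F := by
        rw [← Multiset.count_pos]; exact Nat.pos_of_ne_zero hj1
      have m2 : C2 ∈ F := by
        rw [← Multiset.count_pos]; exact Nat.pos_of_ne_zero hj2
      have m3 : C3 ∈ F := by
        rw [← Multiset.count_pos]; exact Nat.pos_of_ne_zero hk1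
      have m4 : C4 ∈ F := by
        rw [← Multiset.count_pos]; exact Nat.pos_of_ne_zero hk2
      have ne12 : C1 ≠ C2 := by
        intro h
        have : (j, true) ∈ C2 := h ▸ (by simp [hC1])
        simp [hC2, Prod.ext_iff, hjx] at this
      have ne13 : C1 ≠ C3 := by
        intro h
        have : (x, true) ∈ C3 := h ▸ (by simp [hC1])
        simp [hC3, Prod.ext_iff, (Ne.symm hkx)] at this
      have ne14 : C1 ≠ C4 := by
        intro h
        have : (x, true) ∈ C4 := h ▸ (by simp [hC1])
        simp [hC4, Prod.ext_iff, (Ne.symm hkx)] at this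
      have ne23 : C2 ≠ C3 := by
        intro h
        have : (x, true) ∈ C3 := h ▸ (by simp [hC2])
        simp [hC3, Prod.ext_iff, (Ne.symm hkx)] at this
      have ne24 : C2 ≠ C4 := by
        intro h
        have : (x, true) ∈ C4 := h ▸ (by simp [hC2])
        simp [hC4, Prod.ext_iff, (Ne.symm hkx)] at this
      have ne34 : C3 ≠ C4 := by
        intro h
        have : (k, true) ∈ C4 := h ▸ (by simp [hC3])
        simp [hC4, Prod.ext_iff, hkx] at this
      refine ⟨{C1, C2, C3, C4}, ?_, ?_, ?_, ?_⟩
      · have hnd : Multiset.Nodup {C1, C2, C3, C4} := by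
          simp [Multiset.insert_eq_cons, Multiset.nodup_cons, ne12, ne13, ne14, ne23, ne24, ne34]
        rw [Multiset.le_iff_subset hnd]
        intro s hs
        simp only [Multiset.insert_eq_cons, Multiset.mem_cons, Multiset.mem_singleton] at hs
        rcases hs with rfl | rfl | rfl | rfl
        · exact m1
        · exact m2
        · exact m3
        · exact m4
      · rfl
      · simp [Multiset.insert_eq_cons, Multiset.nodup_cons, ne12, ne13, ne14, ne23, ne24, ne34]
      · rintro C hC D hD hne
        simp only [Multiset.insert_eq_cons, Multiset.mem_cons, Multiset.mem_singleton] at hC hD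
        rcases hC with rfl | rfl | rfl | rfl
        · rcases hD with rfl | rfl | rfl | rfl
          · exact absurd rfl hne
          · exact ⟨(j, true), by simp [hC1], by simp [hC2]⟩
          · exact ⟨(x, true), by simp [hC1], by simp [hC3]⟩
          · exact ⟨(x, true), by simp [hC1], by simp [hC4]⟩
        · rcases hD with rfl | rfl | rfl | rfl
          · exact ⟨(j, false), by simp [hC2], by simp [hC1]⟩
          · exact absurd rfl hne
          · exact ⟨(x, true), by simp [hC2], by simp [hC3]⟩
          · exact ⟨(x, true), by simp [hC2], by simp [hC4]⟩
        · rcases hD with rfl | rfl | rfl | rfl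
          · exact ⟨(x, false), by simp [hC3], by simp [hC1]⟩
          · exact ⟨(x, false), by simp [hC3], by simp [hC2]⟩
          · exact absurd rfl hne
          · exact ⟨(k, true), by simp [hC3], by simp [hC4]⟩
        · rcases hD with rfl | rfl | rfl | rfl
          · exact ⟨(x, false), by simp [hC4], by simp [hC1]⟩
          · exact ⟨(x, false), by simp [hC4], by simp [hC2]⟩
          · exact ⟨(k, false), by simp [hC4], by simp [hC3]⟩
          · exact absurd rfl hne
    -- the per-variable contribution to w(x)
    set S : Fin n → ℤ := fun j =>
      (cCl F (x, true) (j, true) : ℤ) + cCl F (x, true) (j, false)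
        - cCl F (x, false) (j, true) - cCl F (x, false) (j, false) with hSdef
    have hsumS : ∑ j : Fin n, S j = 0 := by rw [← hVsum]; exact hV
    have hallS : ∀ j : Fin n, S j = 0 := by
      rcases hdich with hA | hB
      · -- positive side thin : each S j ≤ 0
        have hnp : ∀ j ∈ Finset.univ, S j ≤ 0 := by
          intro j _
          by_cases hj : j = x
          · subst hj; simp [hSdef, himp]
          · have h1 := hedge j hj
            have h2 := hA j
            simp only [hSdef]
            omega
        have := (Finset.sum_eq_zero_iff_of_nonpos hnp).mp hsumS
        intro j; exact this j (Finset.mem_univ j)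
      · -- negative side thin : each S j ≥ 0
        have hnn : ∀ j ∈ Finset.univ, 0 ≤ S j := by
          intro j _
          by_cases hj : j = x
          · subst hj; simp [hSdef, himp]
          · have h1 := hedge j hj
            have h2 := hB j
            simp only [hSdef]
            omega
        have := (Finset.sum_eq_zero_iff_of_nonneg hnn).mp hsumS
        intro j; exact this j (Finset.mem_univ j)
    intro j b hj
    have h1 := hedge j hj
    have h2 := hallS j
    simp only [hSdef] at h2
    have h3 : cCl F (x, true) (j, true) = 0 ∨ cCl F (x, true) (j, false) = 0 ∨
        cCl F (x, false) (j, true) = 0 ∨ cCl F (x, false) (j, false) = 0 := by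
      rcases hdich with hA | hB
      · rcases hA j with h | h
        · exact Or.inl h
        · exact Or.inr (Or.inl h)
      · rcases hB j with h | h
        · exact Or.inr (Or.inr (Or.inl h))
        · exact Or.inr (Or.inr (Or.inr h))
    cases b <;> omega
end

section
/- Let Q = G⁰[U] be an induced star with center x and independent set I = U \ {x} (every vertex of I adjacent to x, no edges within I) in the weighted graph G⁰ arising from a 2-CNF formula, where vertex and edge weights are integers and each edge of the star has nonzero weight. Then there is a subset X ⊆ U such that after switching X (negating the weights of all vertices in X and of all edges with exactly one endpoint in X), the total weight of Q (sum of vertex weights plus edge weights within Q) is at least |I|. -/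
open scoped Classical

/-- Total weight of the induced subgraph on `U` after switching the set `X`:
vertex weights (negated on `X`) plus the weights of the edges inside `U`
(negated when exactly one endpoint is in `X`), each edge counted once. -/
noncomputable def switchedWeight {N : ℕ} (Adj : Fin N → Fin N → Prop)
    (wv : Fin N → ℤ) (we : Fin N → Fin N → ℤ) (U X : Finset (Fin N)) : ℤ :=
  (∑ v ∈ U, if v ∈ X then -wv v else wv v)
    + ∑ u ∈ U, ∑ v ∈ U,
        if u < v ∧ Adj u v then
          (if ((u ∈ X) ↔ (v ∈ X)) then we u v else -we u v)
        else 0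

/-- Let `Q = G⁰[U]` be an induced star with center `x` and leaf set `I` in a graph with
integer vertex weights and nonzero integer edge weights.  Then there is a subset
`X ⊆ U` such that after switching `X` the total weight of `Q` is at least `|I|`. -/
theorem stmt_13 {N : ℕ} (Adj : Fin N → Fin N → Prop)
    (hsymm : ∀ u v, Adj u v → Adj v u)
    (wv : Fin N → ℤ) (we : Fin N → Fin N → ℤ)
    (hwe_symm : ∀ u v, we u v = we v u)
    (hwe_ne : ∀ u v, Adj u v → we u v ≠ 0)
    (x : Fin N) (I : Finset (Fin N)) (hxI : x ∉ I)
    (hstar : ∀ y ∈ I, Adj x y)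
    (hind : ∀ y ∈ I, ∀ z ∈ I, y ≠ z → ¬ Adj y z) :
    ∃ X ⊆ insert x I,
      (I.card : ℤ) ≤ switchedWeight Adj wv we (insert x I) X := by
  classical
  set Y : Finset (Fin N) := I.filter (fun y => we x y < 0) with hY
  set X₂ : Finset (Fin N) := insert x (I \ Y) with hX2
  have hxY : x ∉ Y := fun h => hxI (Finset.mem_of_mem_filter _ h)
  have hxX2 : x ∈ X₂ := Finset.mem_insert_self _ _
  -- general edge sum computation
  have hedge : ∀ X : Finset (Fin N),
      (∑ u ∈ insert x I, ∑ v ∈ insert x I,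
        if u < v ∧ Adj u v then
          (if ((u ∈ X) ↔ (v ∈ X)) then we u v else -we u v) else 0)
      = ∑ y ∈ I, (if ((x ∈ X) ↔ (y ∈ X)) then we x y else -we x y) := by
    intro X
    set F : Fin N → Fin N → ℤ := fun u v =>
      if u < v ∧ Adj u v then
        (if ((u ∈ X) ↔ (v ∈ X)) then we u v else -we u v) else 0 with hF
    have hFxx : F x x = 0 := by simp [hF]
    have hFII : ∀ y ∈ I, ∀ z ∈ I, F y z = 0 := by
      intro y hy z hz
      by_cases hyz : y = z
      · subst hyz; simp [hF]
      · simp [hF, hind y hy z hz hyz]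
    rw [Finset.sum_insert hxI, Finset.sum_insert hxI]
    have h1 : ∑ u ∈ I, ∑ v ∈ insert x I, F u v = ∑ u ∈ I, F u x := by
      refine Finset.sum_congr rfl fun u hu => ?_
      rw [Finset.sum_insert hxI]
      have : ∑ v ∈ I, F u v = 0 :=
        Finset.sum_eq_zero fun v hv => hFII u hu v hv
      simp [this]
    have hFxx' : (if x < x ∧ Adj x x then
        if (x ∈ X) ↔ (x ∈ X) then we x x else -we x x else 0) = (0:ℤ) := by simp
    rw [h1, hFxx', zero_add, ← Finset.sum_add_distrib]
    refine Finset.sum_congr rfl fun y hy => ?_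
    have hxy : x ≠ y := fun h => hxI (h ▸ hy)
    have hA : Adj x y := hstar y hy
    have hA' : Adj y x := hsymm _ _ hA
    rcases lt_or_gt_of_ne hxy with h | h
    · have : ¬ (y < x) := not_lt.mpr h.le
      simp [hF, h, hA, this]
    · have : ¬ (x < y) := not_lt.mpr h.le
      simp [hF, h, hA', this, hwe_symm y x, iff_comm (a := x ∈ X)]
  -- both candidate edge sums equal ∑ |we x y|
  have hmemX2 : ∀ y ∈ I, (y ∈ X₂ ↔ y ∉ Y) := by
    intro y hy
    constructor
    · intro h
      rcases Finset.mem_insert.mp h with h | h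
      · exact absurd (h ▸ hy) hxI
      · exact (Finset.mem_sdiff.mp h).2
    · intro h; exact Finset.mem_insert_of_mem (Finset.mem_sdiff.mpr ⟨hy, h⟩)
  have hEabs : ∀ X : Finset (Fin N), (∀ y ∈ I, ((x ∈ X) ↔ (y ∈ X)) ↔ y ∉ Y) →
      (∑ y ∈ I, (if ((x ∈ X) ↔ (y ∈ X)) then we x y else -we x y))
        = ∑ y ∈ I, |we x y| := by
    intro X hX
    refine Finset.sum_congr rfl fun y hy => ?_
    by_cases hyY : y ∈ Y
    · have hneg : we x y < 0 := (Finset.mem_filter.mp hyY).2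
      have : ¬ ((x ∈ X) ↔ (y ∈ X)) := fun h => (hX y hy).mp h hyY
      rw [if_neg this, abs_of_neg hneg]
    · have hpos : 0 < we x y := by
        have hne := hwe_ne x y (hstar y hy)
        have : ¬ we x y < 0 := fun h => hyY (Finset.mem_filter.mpr ⟨hy, h⟩)
        omega
      have : (x ∈ X) ↔ (y ∈ X) := (hX y hy).mpr hyY
      rw [if_pos this, abs_of_pos hpos]
  have hE1 : (∑ y ∈ I, (if ((x ∈ Y) ↔ (y ∈ Y)) then we x y else -we x y))
      = ∑ y ∈ I, |we x y| := by
    refine hEabs Y fun y hy => ?_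
    simp [hxY]
  have hE2 : (∑ y ∈ I, (if ((x ∈ X₂) ↔ (y ∈ X₂)) then we x y else -we x y))
      = ∑ y ∈ I, |we x y| := by
    refine hEabs X₂ fun y hy => ?_
    simp [hxX2, hmemX2 y hy]
  have hEge : (I.card : ℤ) ≤ ∑ y ∈ I, |we x y| := by
    calc (I.card : ℤ) = ∑ _y ∈ I, (1 : ℤ) := by simp
    _ ≤ ∑ y ∈ I, |we x y| := by
        refine Finset.sum_le_sum fun y hy => ?_
        have h2 : 0 < |we x y| := abs_pos.mpr (hwe_ne x y (hstar y hy))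
        omega
  -- vertex sums are opposite
  have hV : (∑ v ∈ insert x I, if v ∈ Y then -wv v else wv v)
      + (∑ v ∈ insert x I, if v ∈ X₂ then -wv v else wv v) = 0 := by
    rw [← Finset.sum_add_distrib]
    refine Finset.sum_eq_zero fun v hv => ?_
    rcases Finset.mem_insert.mp hv with h | h
    · subst h; simp [hxY, hxX2]
    · by_cases hvY : v ∈ Y
      · have : v ∉ X₂ := fun hc => ((hmemX2 v h).mp hc) hvY
        simp [hvY, this]
      · have : v ∈ X₂ := (hmemX2 v h).mpr hvY
        simp [hvY, this]
  have hsum : switchedWeight Adj wv we (insert x I) Y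
      + switchedWeight Adj wv we (insert x I) X₂ = 2 * ∑ y ∈ I, |we x y| := by
    unfold switchedWeight
    rw [hedge Y, hedge X₂, hE1, hE2]
    linarith [hV]
  have hYU : Y ⊆ insert x I := fun v hv =>
    Finset.mem_insert_of_mem (Finset.mem_of_mem_filter _ hv)
  have hX2U : X₂ ⊆ insert x I := by
    intro v hv
    rcases Finset.mem_insert.mp hv with h | h
    · exact h ▸ Finset.mem_insert_self _ _
    · exact Finset.mem_insert_of_mem (Finset.mem_sdiff.mp h).1
  rcases le_or_gt (I.card : ℤ) (switchedWeight Adj wv we (insert x I) Y) with h | h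
  · exact ⟨Y, hYU, h⟩
  · exact ⟨X₂, hX2U, by linarith⟩
end

section
/- Let Q₁ = (U₁,H₁), …, Q_t = (U_t,H_t) be vertex-disjoint induced stars in a weighted graph G⁰ (integer vertex weights, nonzero integer edge weights), with centers x₁,…,x_t and leaf sets I_i = U_i \ {x_i}. Let U = U₁ ∪ ⋯ ∪ U_t and Q = G⁰[U]. Then there exists a subset X ⊆ U such that after switching X, the total weight of Q (vertex weights plus weights of edges within U) is at least Σ_{i=1}^t |I_i|. -/
open scoped Classical

/-- Let `Q₁,…,Q_t` be vertex-disjoint induced stars, with centers `x i` and leaf sets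
`I i`, in a graph with integer vertex weights and nonzero integer edge weights.  With
`U = U₁ ∪ ⋯ ∪ U_t`, there exists `X ⊆ U` such that after switching `X` the total weight
of `Q = G⁰[U]` is at least `Σᵢ |Iᵢ|`. -/
theorem stmt_14 {N : ℕ} (Adj : Fin N → Fin N → Prop)
    (hsymm : ∀ u v, Adj u v → Adj v u)
    (wv : Fin N → ℤ) (we : Fin N → Fin N → ℤ)
    (hwe_symm : ∀ u v, we u v = we v u)
    (hwe_ne : ∀ u v, Adj u v → we u v ≠ 0)
    (t : ℕ) (x : Fin t → Fin N) (I : Fin t → Finset (Fin N))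
    (hxI : ∀ i, x i ∉ I i)
    (hdisj : ∀ i j, i ≠ j → Disjoint (insert (x i) (I i)) (insert (x j) (I j)))
    (hstar : ∀ i, ∀ y ∈ I i, Adj (x i) y)
    (hind : ∀ i, ∀ y ∈ I i, ∀ z ∈ I i, y ≠ z → ¬ Adj y z) :
    ∃ X ⊆ Finset.univ.biUnion (fun i => insert (x i) (I i)),
      (∑ i, ((I i).card : ℤ)) ≤
        switchedWeight Adj wv we (Finset.univ.biUnion (fun i => insert (x i) (I i))) X := by
  classical
  set Us : Fin t → Finset (Fin N) := fun i => insert (x i) (I i) with hUs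
  set Uall : Finset (Fin N) := Finset.univ.biUnion Us with hUall
  set P : Fin t → Finset (Fin N) := fun i => (I i).filter (fun y => we (x i) y < 0) with hPdef
  set Xs : Finset (Fin t) → Finset (Fin N) :=
    fun S => Finset.univ.biUnion (fun i => if i ∈ S then Us i \ P i else P i) with hXsdef
  have hPsub : ∀ i, P i ⊆ Us i := fun i =>
    (Finset.filter_subset _ _).trans (Finset.subset_insert _ _)
  have hsub : ∀ (S : Finset (Fin t)) i, (if i ∈ S then Us i \ P i else P i) ⊆ Us i := by
    intro S i
    by_cases h : i ∈ S
    · simp only [h, if_true]; exact (Finset.sdiff_subset).trans (le_refl _)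
    · simp only [h, if_false]; exact hPsub i
  have hXsub : ∀ S, Xs S ⊆ Uall := by
    intro S v hv
    rw [hXsdef, Finset.mem_biUnion] at hv
    obtain ⟨i, -, hi⟩ := hv
    exact Finset.mem_biUnion.2 ⟨i, Finset.mem_univ _, hsub S i hi⟩
  -- membership characterization
  have hmem : ∀ (j : Fin t) (v : Fin N), v ∈ Us j → ∀ S,
      (v ∈ Xs S ↔ (if j ∈ S then v ∉ P j else v ∈ P j)) := by
    intro j v hv S
    constructor
    · intro h
      rw [hXsdef, Finset.mem_biUnion] at h
      obtain ⟨i, -, hi⟩ := h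
      rcases eq_or_ne i j with rfl | hij
      · by_cases hjS : i ∈ S
        · simp only [hjS, if_true] at hi ⊢; exact (Finset.mem_sdiff.1 hi).2
        · simp only [hjS, if_false] at hi ⊢; exact hi
      · exact absurd hv (Finset.disjoint_left.mp (hdisj i j hij) (hsub S i hi))
    · intro h
      rw [hXsdef, Finset.mem_biUnion]
      refine ⟨j, Finset.mem_univ _, ?_⟩
      by_cases hjS : j ∈ S
      · simp only [hjS, if_true] at h ⊢; exact Finset.mem_sdiff.2 ⟨hv, h⟩
      · simp only [hjS, if_false] at h ⊢; exact h
  have hxP : ∀ i, x i ∉ P i := by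
    intro i h
    exact hxI i (Finset.mem_filter.1 h).1
  -- the flip involution
  set flip : Fin t → Finset (Fin t) → Finset (Fin t) :=
    fun j S => if j ∈ S then S.erase j else insert j S with hflipdef
  have hflip_mem_self : ∀ j S, (j ∈ flip j S ↔ j ∉ S) := by
    intro j S
    by_cases h : j ∈ S <;> simp [hflipdef, h]
  have hflip_mem : ∀ i j S, i ≠ j → (i ∈ flip j S ↔ i ∈ S) := by
    intro i j S hij
    by_cases h : j ∈ S <;> simp [hflipdef, h, Finset.mem_erase, Finset.mem_insert, hij,
      (by exact fun hh => hij hh : i = j → False)]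
  have hflip_flip : ∀ j S, flip j (flip j S) = S := by
    intro j S
    ext i
    rcases eq_or_ne i j with rfl | hij
    · rw [hflip_mem_self, hflip_mem_self]; tauto
    · rw [hflip_mem _ _ _ hij, hflip_mem _ _ _ hij]
  have hflip_ne : ∀ j S, flip j S ≠ S := by
    intro j S h
    have := hflip_mem_self j S
    rw [h] at this
    tauto
  -- flipping star j flips membership of v ∈ Us j in Xs, keeps others
  have hflipX : ∀ (j : Fin t) (v : Fin N), v ∈ Us j → ∀ S,
      (v ∈ Xs (flip j S) ↔ v ∉ Xs S) := by
    intro j v hv S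
    rw [hmem j v hv, hmem j v hv]
    by_cases h : j ∈ S
    · have h2 : j ∉ flip j S := fun hh => (hflip_mem_self j S).1 hh h
      rw [if_neg h2, if_pos h]; tauto
    · have h2 : j ∈ flip j S := (hflip_mem_self j S).2 h
      rw [if_pos h2, if_neg h]
  have hkeepX : ∀ (i j : Fin t), i ≠ j → ∀ (v : Fin N), v ∈ Us j → ∀ S,
      (v ∈ Xs (flip i S) ↔ v ∈ Xs S) := by
    intro i j hij v hv S
    rw [hmem j v hv, hmem j v hv]
    have h3 := hflip_mem j i S (Ne.symm hij)
    by_cases h : j ∈ S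
    · rw [if_pos (h3.2 h), if_pos h]
    · rw [if_neg (fun hh => h (h3.1 hh)), if_neg h]
  -- same-star sign lemma
  have hsame : ∀ (i : Fin t) (u v : Fin N), u ∈ Us i → v ∈ Us i → u ≠ v → Adj u v →
      ∀ S, (((u ∈ Xs S) ↔ (v ∈ Xs S)) ↔ 0 < we u v) := by
    intro i u v hu hv huv hadj S
    rw [hmem i u hu S, hmem i v hv S]
    have hne := hwe_ne _ _ hadj
    rcases Finset.mem_insert.1 hu with rfl | huI
    · rcases Finset.mem_insert.1 hv with rfl | hvI
      · exact absurd rfl huv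
      · have hvP : v ∈ P i ↔ we (x i) v < 0 := by
          simp [hPdef, hvI]
        by_cases h : i ∈ S
        · rw [if_pos h, if_pos h]
          simp only [hxP i, not_false_iff, true_iff, hvP]
          omega
        · rw [if_neg h, if_neg h]
          simp only [(hxP i : x i ∉ P i), false_iff, hvP]
          omega
    · rcases Finset.mem_insert.1 hv with rfl | hvI
      · have huP : u ∈ P i ↔ we (x i) u < 0 := by
          simp [hPdef, huI]
        have hwsym : we u (x i) = we (x i) u := hwe_symm _ _
        by_cases h : i ∈ S
        · rw [if_pos h, if_pos h]
          simp only [hxP i, not_false_iff, iff_true, huP, hwsym]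
          omega
        · rw [if_neg h, if_neg h]
          simp only [(hxP i : x i ∉ P i), iff_false, huP, hwsym]
          omega
      · exact absurd hadj (hind i u huI v hvI huv)
  -- vertex terms sum to zero over all switch patterns
  have hvertexzero : ∀ v ∈ Uall, ∑ S : Finset (Fin t), (if v ∈ Xs S then -wv v else wv v) = 0 := by
    intro v hv
    obtain ⟨j, -, hvj⟩ := Finset.mem_biUnion.1 hv
    refine Finset.sum_ninvolution (flip j) ?_ (fun S _ => hflip_ne j S)
      (fun S => Finset.mem_univ _) (fun S => hflip_flip j S)
    intro S
    have h1 := hflipX j v hvj S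
    by_cases h : v ∈ Xs S
    · rw [if_pos h, if_neg (fun hh => (h1.1 hh) h)]; ring
    · rw [if_neg h, if_pos (h1.2 h)]; ring
  -- cross edges sum to zero
  have hcross : ∀ (i j : Fin t), i ≠ j → ∀ (u v : Fin N), u ∈ Us i → v ∈ Us j →
      ∑ S : Finset (Fin t),
        (if u < v ∧ Adj u v then
          (if ((u ∈ Xs S) ↔ (v ∈ Xs S)) then we u v else -we u v) else 0) = 0 := by
    intro i j hij u v hu hvj
    refine Finset.sum_ninvolution (flip i) ?_ (fun S _ => hflip_ne i S)
      (fun S => Finset.mem_univ _) (fun S => hflip_flip i S)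
    intro S
    by_cases hc : u < v ∧ Adj u v
    · rw [if_pos hc, if_pos hc]
      have h3 : ((u ∈ Xs (flip i S)) ↔ (v ∈ Xs (flip i S))) ↔ ¬((u ∈ Xs S) ↔ (v ∈ Xs S)) := by
        rw [hflipX i u hu S, hkeepX i j hij v hvj S]; tauto
      by_cases h : (u ∈ Xs S) ↔ (v ∈ Xs S)
      · rw [if_pos h, if_neg (fun hh => (h3.1 hh) h)]; ring
      · rw [if_neg h, if_pos (h3.2 h)]; ring
    · rw [if_neg hc, if_neg hc]; ring
  set g : Fin N → Fin N → ℤ := fun u v => ∑ S : Finset (Fin t),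
      (if u < v ∧ Adj u v then
        (if ((u ∈ Xs S) ↔ (v ∈ Xs S)) then we u v else -we u v) else 0) with hgdef
  have hsameval : ∀ (i : Fin t) (u v : Fin N), u ∈ Us i → v ∈ Us i → u < v → Adj u v →
      ∀ S : Finset (Fin t),
        (if u < v ∧ Adj u v then
          (if ((u ∈ Xs S) ↔ (v ∈ Xs S)) then we u v else -we u v) else 0) = |we u v| := by
    intro i u v hu hv hlt hadj S
    rw [if_pos ⟨hlt, hadj⟩]
    have hs := hsame i u v hu hv (ne_of_lt hlt) hadj S
    by_cases hw : 0 < we u v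
    · rw [if_pos (hs.2 hw), abs_of_pos hw]
    · rw [if_neg (fun hh => hw (hs.1 hh)), abs_of_nonpos (le_of_not_gt hw)]
  have hgsame : ∀ (i : Fin t) (u v : Fin N), u ∈ Us i → v ∈ Us i → u < v → Adj u v →
      g u v = 2 ^ t * |we u v| := by
    intro i u v hu hv hlt hadj
    rw [hgdef]
    simp only
    rw [Finset.sum_congr rfl (fun S _ => hsameval i u v hu hv hlt hadj S),
      Finset.sum_const, Finset.card_univ, Fintype.card_finset, Fintype.card_fin,
      nsmul_eq_mul]
    push_cast
    ring
  have hgnn : ∀ u ∈ Uall, ∀ v ∈ Uall, 0 ≤ g u v := by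
    intro u hu v hv
    obtain ⟨i, -, hui⟩ := Finset.mem_biUnion.1 hu
    obtain ⟨j, -, hvj⟩ := Finset.mem_biUnion.1 hv
    rcases eq_or_ne i j with rfl | hij
    · by_cases hc : u < v ∧ Adj u v
      · rw [hgsame i u v hui hvj hc.1 hc.2]
        positivity
      · rw [hgdef]
        simp [hc]
    · rw [hgdef]
      simp only
      exact le_of_eq (hcross i j hij u v hui hvj).symm
  set sp : Fin t → Fin N → Fin N × Fin N :=
    fun i y => if x i < y then (x i, y) else (y, x i) with hspdef
  have hsp : ∀ (i : Fin t) (y : Fin N), y ∈ I i →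
      (sp i y).1 ∈ Us i ∧ (sp i y).2 ∈ Us i ∧ (sp i y).1 < (sp i y).2 ∧
        Adj (sp i y).1 (sp i y).2 ∧ |we (sp i y).1 (sp i y).2| = |we (x i) y| := by
    intro i y hy
    have hne : x i ≠ y := fun h => hxI i (h ▸ hy)
    simp only [hspdef]
    by_cases h : x i < y
    · rw [if_pos h]
      exact ⟨Finset.mem_insert_self _ _, Finset.mem_insert_of_mem hy, h, hstar i y hy, rfl⟩
    · rw [if_neg h]
      exact ⟨Finset.mem_insert_of_mem hy, Finset.mem_insert_self _ _,
        lt_of_le_of_ne (le_of_not_gt h) (fun he => hne he.symm),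
        hsymm _ _ (hstar i y hy), by rw [hwe_symm]⟩
  set E0 : Finset (Fin N × Fin N) :=
    Finset.univ.biUnion (fun i => (I i).image (sp i)) with hE0def
  have hE0sub : E0 ⊆ Uall ×ˢ Uall := by
    intro p hp
    obtain ⟨i, -, hp⟩ := Finset.mem_biUnion.1 hp
    obtain ⟨y, hy, rfl⟩ := Finset.mem_image.1 hp
    obtain ⟨h1, h2, -, -, -⟩ := hsp i y hy
    exact Finset.mem_product.2 ⟨Finset.mem_biUnion.2 ⟨i, Finset.mem_univ _, h1⟩,
      Finset.mem_biUnion.2 ⟨i, Finset.mem_univ _, h2⟩⟩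
  have hd : Set.PairwiseDisjoint (↑(Finset.univ : Finset (Fin t)))
      (fun i => (I i).image (sp i)) := by
    intro a _ b _ hab
    refine Finset.disjoint_left.2 ?_
    intro p hpa hpb
    obtain ⟨y, hy, rfl⟩ := Finset.mem_image.1 hpa
    obtain ⟨z, hz, hpz⟩ := Finset.mem_image.1 hpb
    have h1 := (hsp a y hy).1
    have h2 := (hsp b z hz).1
    rw [hpz] at h2
    exact (Finset.disjoint_left.1 (hdisj a b hab) h1) h2
  have hinj : ∀ i : Fin t, ∀ y ∈ I i, ∀ z ∈ I i, sp i y = sp i z → y = z := by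
    intro i y hy z hz hyz
    by_cases h : x i < y <;> by_cases h' : x i < z <;>
      simp only [hspdef, h, h', if_true, if_false, Prod.mk.injEq] at hyz
    · exact hyz.2
    · exact absurd hyz.1.symm (fun hh => hxI i (hh ▸ hz))
    · exact absurd hyz.1 (fun hh => hxI i (hh.symm ▸ hy))
    · exact hyz.1
  have hinner : ∀ i : Fin t, (2 ^ t : ℤ) * (I i).card ≤ ∑ p ∈ (I i).image (sp i), g p.1 p.2 := by
    intro i
    rw [Finset.sum_image (hinj i)]
    have hb : ∀ y ∈ I i, (2:ℤ)^t ≤ g (sp i y).1 (sp i y).2 := by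
      intro y hy
      obtain ⟨h1, h2, h3, h4, h5⟩ := hsp i y hy
      rw [hgsame i _ _ h1 h2 h3 h4, h5]
      have hne0 : we (x i) y ≠ 0 := hwe_ne _ _ (hstar i y hy)
      have h1le : (1:ℤ) ≤ |we (x i) y| := Int.one_le_abs hne0
      exact le_mul_of_one_le_right (by positivity) h1le
    calc (2^t:ℤ) * (I i).card = ∑ _y ∈ I i, (2^t:ℤ) := by
          rw [Finset.sum_const, nsmul_eq_mul]; ring
      _ ≤ ∑ y ∈ I i, g (sp i y).1 (sp i y).2 := Finset.sum_le_sum hb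
  have hE0sum : 2 ^ t * (∑ i, ((I i).card : ℤ)) ≤ ∑ p ∈ E0, g p.1 p.2 := by
    rw [hE0def, Finset.sum_biUnion hd]
    calc 2^t * ∑ i, ((I i).card:ℤ) = ∑ i, 2^t * ((I i).card:ℤ) := by rw [Finset.mul_sum]
      _ ≤ ∑ i, ∑ p ∈ (I i).image (sp i), g p.1 p.2 := Finset.sum_le_sum (fun i _ => hinner i)
  have hmain : 2 ^ t * (∑ i, ((I i).card : ℤ)) ≤
      ∑ S : Finset (Fin t), switchedWeight Adj wv we Uall (Xs S) := by
    have heq : ∑ S : Finset (Fin t), switchedWeight Adj wv we Uall (Xs S)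
        = (∑ v ∈ Uall, ∑ S : Finset (Fin t), (if v ∈ Xs S then -wv v else wv v))
          + ∑ u ∈ Uall, ∑ v ∈ Uall, g u v := by
      simp only [switchedWeight, Finset.sum_add_distrib]
      congr 1
      · exact Finset.sum_comm
      · rw [Finset.sum_comm]
        exact Finset.sum_congr rfl (fun u _ => Finset.sum_comm)
    rw [heq, Finset.sum_eq_zero (fun v hv => hvertexzero v hv), zero_add]
    calc 2^t * ∑ i, ((I i).card:ℤ) ≤ ∑ p ∈ E0, g p.1 p.2 := hE0sum
      _ ≤ ∑ p ∈ Uall ×ˢ Uall, g p.1 p.2 := Finset.sum_le_sum_of_subset_of_nonneg hE0sub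
          (fun p hp _ => hgnn p.1 (Finset.mem_product.1 hp).1 p.2 (Finset.mem_product.1 hp).2)
      _ = ∑ u ∈ Uall, ∑ v ∈ Uall, g u v := Finset.sum_product _ _ _
  have hnonempty : (Finset.univ : Finset (Finset (Fin t))).Nonempty := ⟨∅, Finset.mem_univ _⟩
  obtain ⟨S, -, hS⟩ := Finset.exists_le_of_sum_le hnonempty
    (show ∑ _S : Finset (Fin t), (∑ i, ((I i).card : ℤ))
        ≤ ∑ S : Finset (Fin t), switchedWeight Adj wv we Uall (Xs S) by
      rw [Finset.sum_const, Finset.card_univ, Fintype.card_finset, Fintype.card_fin,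
        nsmul_eq_mul]
      push_cast
      exact hmain)
  exact ⟨Xs S, hXsub S, hS⟩
end

section
/- Let S be a nonempty family of distinct nonempty subsets of {1,…,n}, each of size at most r, with nonzero integer coefficients c_I, and define X(x) = Σ_{I ∈ S} c_I Π_{i∈I} x_i for x ∈ {−1,1}ⁿ. If |S| ≥ 4·8^{2r}·k² for a positive integer k, then there exists x ∈ {−1,1}ⁿ with X(x) ≥ k. -/
/-- The value of the multilinear polynomial `X(x) = Σ_{I ∈ S} c_I Π_{i∈I} x_i`
at the sign vector determined by `ε : Fin n → Bool`. -/
noncomputable def polyX (n : ℕ) (S : Finset (Finset (Fin n))) (c : Finset (Fin n) → ℤ)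
    (ε : Fin n → Bool) : ℝ :=
  ∑ I ∈ S, (c I : ℝ) * ∏ i ∈ I, (if ε i then (1 : ℝ) else -1)

/-- Expectation of a function of a uniform random sign vector. -/
noncomputable def cubeExp (n : ℕ) (f : (Fin n → Bool) → ℝ) : ℝ :=
  (1 / 2 ^ n : ℝ) * ∑ ε : Fin n → Bool, f ε

open Finset

lemma walsh_zero (n : ℕ) (T : Finset (Fin n)) (hT : T.Nonempty) :
    ∑ ε : Fin n → Bool, ∏ i ∈ T, (if ε i then (1:ℝ) else -1) = 0 := by
  obtain ⟨i₀, hi₀⟩ := hT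
  apply Finset.sum_ninvolution (fun ε => Function.update ε i₀ (!ε i₀))
  · intro ε
    have key : ∏ i ∈ T, (if Function.update ε i₀ (!ε i₀) i then (1:ℝ) else -1)
        = - ∏ i ∈ T, (if ε i then (1:ℝ) else -1) := by
      rw [← Finset.mul_prod_erase T _ hi₀, ← Finset.mul_prod_erase T
        (fun i => if ε i then (1:ℝ) else -1) hi₀]
      have h1 : (if Function.update ε i₀ (!ε i₀) i₀ then (1:ℝ) else -1)
          = -(if ε i₀ then (1:ℝ) else -1) := by
        simp only [Function.update_self]; cases ε i₀ <;> simp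
      have h2 : ∀ i ∈ T.erase i₀, (if Function.update ε i₀ (!ε i₀) i then (1:ℝ) else -1)
          = (if ε i then (1:ℝ) else -1) := by
        intro i hi
        rw [Function.update_of_ne (Finset.ne_of_mem_erase hi)]
      rw [Finset.prod_congr rfl h2, h1]
      ring
    rw [key]; ring
  · intro ε h hcon
    have := congrFun hcon i₀
    simp [Function.update_self] at this
  · intro ε; exact Finset.mem_univ _
  · intro ε
    funext i
    by_cases h : i = i₀
    · subst h; simp [Function.update_self]
    · simp [Function.update_of_ne h]

lemma prod_mul_prod_symmdiff {α : Type*} [DecidableEq α] (I J : Finset α) (s : α → ℝ)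
    (hsq : ∀ i, s i * s i = 1) :
    (∏ i ∈ I, s i) * ∏ i ∈ J, s i = ∏ i ∈ (I \ J) ∪ (J \ I), s i := by
  have hI : ∏ i ∈ I, s i = (∏ i ∈ I \ J, s i) * ∏ i ∈ I ∩ J, s i := by
    rw [← Finset.prod_union (Finset.disjoint_sdiff_inter I J), Finset.sdiff_union_inter]
  have hJ : ∏ i ∈ J, s i = (∏ i ∈ J \ I, s i) * ∏ i ∈ I ∩ J, s i := by
    rw [Finset.inter_comm, ← Finset.prod_union (Finset.disjoint_sdiff_inter J I),
      Finset.sdiff_union_inter]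
  have hd : Disjoint (I \ J) (J \ I) := disjoint_sdiff_sdiff
  have h1 : (∏ i ∈ I ∩ J, s i) * ∏ i ∈ I ∩ J, s i = 1 := by
    rw [← Finset.prod_mul_distrib]
    exact Finset.prod_eq_one fun i _ => hsq i
  rw [hI, hJ, Finset.prod_union hd]
  linear_combination ((∏ i ∈ I \ J, s i) * ∏ i ∈ J \ I, s i) * h1

lemma key_arith (P C K T1 T2 T3 T4 : ℝ) (hP : 0 < P) (hC : 0 < C) (hK : 1 ≤ K)
    (hT1 : 0 ≤ T1)
    (CS1 : T2^2 ≤ T1*T3) (CS2 : T3^2 ≤ T2*T4) (h4 : P*T4 ≤ C*T2^2)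
    (hT2low : P*(4*C*K^2) ≤ T2) : 2*P*K ≤ T1 := by
  have hKpos : (0:ℝ) < K := by linarith
  have hpos : 0 < P*(4*C*K^2) := by
    apply mul_pos hP
    apply mul_pos (by linarith) (pow_pos hKpos 2)
  have hT2pos : 0 < T2 := lt_of_lt_of_le hpos hT2low
  have a1 : T2^2 * T2^2 ≤ (T1*T3) * (T1*T3) := mul_self_le_mul_self (sq_nonneg _) CS1
  have a2 : T1^2 * T3^2 ≤ T1^2 * (T2*T4) := mul_le_mul_of_nonneg_left CS2 (sq_nonneg _)
  have a3 : T2^4 ≤ T1^2 * T2 * T4 := by nlinarith [a1, a2]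
  have b1 : P * T2^4 ≤ T1^2 * T2 * (P * T4) := by nlinarith [mul_le_mul_of_nonneg_left a3 hP.le]
  have b2 : T1^2 * T2 * (P * T4) ≤ T1^2 * T2 * (C * T2^2) := by
    apply mul_le_mul_of_nonneg_left h4
    positivity
  have b3 : (P * T2) * T2^3 ≤ (C * T1^2) * T2^3 := by nlinarith [b1, b2]
  have key : P * T2 ≤ C * T1^2 := le_of_mul_le_mul_right b3 (by positivity)
  have hsq : 4 * P^2 * K^2 ≤ T1^2 := by
    have h : C * (4 * P^2 * K^2) ≤ C * T1^2 := by
      calc C * (4 * P^2 * K^2) = P * (P * (4 * C * K^2)) := by ring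
      _ ≤ P * T2 := mul_le_mul_of_nonneg_left hT2low hP.le
      _ ≤ C * T1^2 := key
    exact le_of_mul_le_mul_left h hC
  nlinarith [hsq, hT1, hP, hKpos]


/-- Let `S` be a nonempty family of distinct nonempty subsets of `{1,…,n}`, each of size
at most `r`, with nonzero integer coefficients `c_I`, and let
`X(x) = Σ_{I ∈ S} c_I Π_{i∈I} x_i` for `x ∈ {−1,1}ⁿ`.  Assuming the hypercontractive
bound `E(X⁴) ≤ 2^{6r}·E(X²)²`, if `|S| ≥ 4·8^{2r}·k²` for a positive integer `k`, then
there exists `x ∈ {−1,1}ⁿ` with `X(x) ≥ k`. -/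
theorem stmt_19 (n r k : ℕ) (hk : 1 ≤ k)
    (S : Finset (Finset (Fin n))) (c : Finset (Fin n) → ℤ)
    (hS : S.Nonempty)
    (hne : ∀ I ∈ S, I.Nonempty)
    (hr : ∀ I ∈ S, I.card ≤ r)
    (hc : ∀ I ∈ S, c I ≠ 0)
    (hyper : cubeExp n (fun ε => (polyX n S c ε) ^ 4)
              ≤ 2 ^ (6 * r) * (cubeExp n (fun ε => (polyX n S c ε) ^ 2)) ^ 2)
    (hcard : 4 * 8 ^ (2 * r) * k ^ 2 ≤ S.card) :
    ∃ ε : Fin n → Bool, (k : ℝ) ≤ polyX n S c ε := by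
  classical
  by_contra hcon
  push_neg at hcon
  set f : (Fin n → Bool) → ℝ := polyX n S c with hf
  set P : ℝ := 2 ^ n with hPdef
  have hP : (0:ℝ) < P := by positivity
  set C : ℝ := 2 ^ (6 * r) with hCdef
  have hC : (0:ℝ) < C := by positivity
  have hk1 : (1:ℝ) ≤ (k:ℝ) := by exact_mod_cast hk
  have hcardBool : (Finset.univ : Finset (Fin n → Bool)).card = 2 ^ n := by
    simp [Finset.card_univ]
  -- E X = 0
  have hT0 : ∑ ε : Fin n → Bool, f ε = 0 := by
    rw [show (fun ε : Fin n → Bool => f ε) = fun ε =>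
        ∑ I ∈ S, (c I : ℝ) * ∏ i ∈ I, (if ε i then (1:ℝ) else -1) from rfl]
    rw [Finset.sum_comm]
    apply Finset.sum_eq_zero
    intro I hI
    rw [← Finset.mul_sum, walsh_zero n I (hne I hI), mul_zero]
  -- second moment
  have hT2val : ∑ ε : Fin n → Bool, (f ε)^2 = P * ∑ I ∈ S, (c I:ℝ)^2 := by
    have expand : ∀ ε : Fin n → Bool, (f ε)^2 = ∑ I ∈ S, ∑ J ∈ S,
        ((c I:ℝ) * (c J:ℝ) * ∏ i ∈ (I \ J) ∪ (J \ I), (if ε i then (1:ℝ) else -1)) := by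
      intro ε
      have hsq : ∀ i : Fin n, (if ε i then (1:ℝ) else -1) * (if ε i then (1:ℝ) else -1) = 1 := by
        intro i; cases ε i <;> norm_num
      rw [hf, polyX, sq, Finset.sum_mul_sum]
      apply Finset.sum_congr rfl
      intro I _
      apply Finset.sum_congr rfl
      intro J _
      rw [← prod_mul_prod_symmdiff I J _ hsq]
      ring
    have inner : ∀ I ∈ S, ∑ J ∈ S, ∑ ε : Fin n → Bool,
        ((c I:ℝ) * (c J:ℝ) * ∏ i ∈ (I \ J) ∪ (J \ I), (if ε i then (1:ℝ) else -1))
        = (c I:ℝ)^2 * P := by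
      intro I hI
      have step : ∀ J ∈ S, ∑ ε : Fin n → Bool,
          ((c I:ℝ) * (c J:ℝ) * ∏ i ∈ (I \ J) ∪ (J \ I), (if ε i then (1:ℝ) else -1))
          = if J = I then (c I:ℝ)^2 * P else 0 := by
        intro J hJ
        rw [← Finset.mul_sum]
        by_cases h : J = I
        · subst h
          simp only [Finset.sdiff_self, Finset.union_empty, Finset.prod_empty, if_true]
          rw [Finset.sum_const, hcardBool, nsmul_eq_mul, mul_one, hPdef]
          push_cast
          ring
        · have hD : ((I \ J) ∪ (J \ I)).Nonempty := by
            rw [Finset.nonempty_iff_ne_empty]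
            intro hE
            obtain ⟨h1, h2⟩ := Finset.union_eq_empty.mp hE
            exact h (le_antisymm (Finset.sdiff_eq_empty_iff_subset.mp h2)
              (Finset.sdiff_eq_empty_iff_subset.mp h1))
          rw [walsh_zero n _ hD, mul_zero, if_neg h]
      rw [Finset.sum_congr rfl step, Finset.sum_ite_eq' S I (fun _ => (c I:ℝ)^2 * P), if_pos hI]
    have swap : ∀ I ∈ S, (∑ ε : Fin n → Bool, ∑ J ∈ S,
        ((c I:ℝ) * (c J:ℝ) * ∏ i ∈ (I \ J) ∪ (J \ I), (if ε i then (1:ℝ) else -1)))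
        = (c I:ℝ)^2 * P := by
      intro I hI
      rw [Finset.sum_comm]
      exact inner I hI
    rw [Finset.sum_congr rfl (fun ε _ => expand ε), Finset.sum_comm,
      Finset.sum_congr rfl swap, ← Finset.sum_mul]
    ring
  -- each coefficient squared ≥ 1
  have hcsq : (S.card : ℝ) ≤ ∑ I ∈ S, (c I:ℝ)^2 := by
    have h1 : ∀ I ∈ S, (1:ℝ) ≤ (c I:ℝ)^2 := by
      intro I hI
      have h2 : (1:ℤ) ≤ |c I| := Int.one_le_abs (hc I hI)
      have h3 : (1:ℤ) ≤ (c I)^2 := by nlinarith [sq_abs (c I), h2]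
      exact_mod_cast h3
    calc (S.card : ℝ) = ∑ _I ∈ S, (1:ℝ) := by simp
    _ ≤ _ := Finset.sum_le_sum h1
  set T1 : ℝ := ∑ ε : Fin n → Bool, |f ε| with hT1def
  set T2 : ℝ := ∑ ε : Fin n → Bool, (f ε)^2 with hT2def
  set T3 : ℝ := ∑ ε : Fin n → Bool, |f ε|^3 with hT3def
  set T4 : ℝ := ∑ ε : Fin n → Bool, (f ε)^4 with hT4def
  have hT1nn : 0 ≤ T1 := Finset.sum_nonneg fun ε _ => abs_nonneg _
  -- Cauchy-Schwarz 1 : T2^2 ≤ T1 * T3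
  have CS1 : T2^2 ≤ T1 * T3 := by
    have h := Finset.sum_mul_sq_le_sq_mul_sq Finset.univ
      (fun ε : Fin n → Bool => Real.sqrt |f ε|) (fun ε => (Real.sqrt |f ε|)^3)
    have e2 : ∀ ε : Fin n → Bool, (Real.sqrt |f ε|)^2 = |f ε| := fun ε =>
      Real.sq_sqrt (abs_nonneg _)
    have e1 : ∀ ε : Fin n → Bool, Real.sqrt |f ε| * (Real.sqrt |f ε|)^3 = (f ε)^2 := by
      intro ε
      calc Real.sqrt |f ε| * (Real.sqrt |f ε|)^3 = ((Real.sqrt |f ε|)^2)^2 := by ring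
      _ = |f ε|^2 := by rw [e2]
      _ = (f ε)^2 := sq_abs _
    have e3 : ∀ ε : Fin n → Bool, ((Real.sqrt |f ε|)^3)^2 = |f ε|^3 := by
      intro ε
      calc ((Real.sqrt |f ε|)^3)^2 = ((Real.sqrt |f ε|)^2)^3 := by ring
      _ = |f ε|^3 := by rw [e2]
    simp only [e1, e2, e3] at h
    exact h
  -- Cauchy-Schwarz 2 : T3^2 ≤ T2 * T4
  have CS2 : T3^2 ≤ T2 * T4 := by
    have h := Finset.sum_mul_sq_le_sq_mul_sq Finset.univ
      (fun ε : Fin n → Bool => |f ε|) (fun ε => (f ε)^2)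
    have e1 : ∀ ε : Fin n → Bool, |f ε| * (f ε)^2 = |f ε|^3 := by
      intro ε; rw [← sq_abs]; ring
    have e2 : ∀ ε : Fin n → Bool, |f ε|^2 = (f ε)^2 := fun ε => sq_abs _
    have e3 : ∀ ε : Fin n → Bool, ((f ε)^2)^2 = (f ε)^4 := by intro ε; ring
    simp only [e1, e2, e3] at h
    exact h
  -- hypercontractivity in sum form
  have h4 : P * T4 ≤ C * T2^2 := by
    have h' : (1/P) * T4 ≤ C * ((1/P) * T2)^2 := hyper
    have hPne : P ≠ 0 := ne_of_gt hP
    calc P * T4 = P^2 * ((1/P) * T4) := by field_simp; try ring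
    _ ≤ P^2 * (C * ((1/P) * T2)^2) := mul_le_mul_of_nonneg_left h' (by positivity)
    _ = C * T2^2 := by field_simp; try ring
  -- lower bound on T2
  have h8C : ((8:ℝ))^(2*r) = C := by
    rw [hCdef, show (8:ℝ) = 2^3 by norm_num, ← pow_mul]
    congr 1
    ring
  have hT2low : P * (4 * C * (k:ℝ)^2) ≤ T2 := by
    have hcR : (4:ℝ) * 8^(2*r) * (k:ℝ)^2 ≤ (S.card : ℝ) := by exact_mod_cast hcard
    rw [h8C] at hcR
    rw [hT2val]
    have := mul_le_mul_of_nonneg_left (hcR.trans hcsq) hP.le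
    linarith [this]
  -- main estimate
  have hT1ge : 2 * P * (k:ℝ) ≤ T1 :=
    key_arith P C (k:ℝ) T1 T2 T3 T4 hP hC hk1 hT1nn CS1 CS2 h4 hT2low
  -- contradiction with pointwise bound
  have habs : ∀ a : ℝ, |a| = 2 * max a 0 - a := by
    intro a
    rcases le_total a 0 with h | h
    · rw [abs_of_nonpos h, max_eq_right h]; ring
    · rw [abs_of_nonneg h, max_eq_left h]; ring
  have hT1eq : T1 = 2 * (∑ ε : Fin n → Bool, max (f ε) 0) := by
    rw [hT1def, Finset.sum_congr rfl (fun ε _ => habs (f ε)), Finset.sum_sub_distrib,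
      ← Finset.mul_sum, hT0]
    ring
  have hlt : ∑ ε : Fin n → Bool, max (f ε) 0 < P * k := by
    have hmax : ∀ ε : Fin n → Bool, max (f ε) 0 < (k:ℝ) := by
      intro ε
      exact max_lt (hcon ε) (by linarith)
    calc ∑ ε : Fin n → Bool, max (f ε) 0 < ∑ _ε : Fin n → Bool, (k:ℝ) :=
      Finset.sum_lt_sum_of_nonempty Finset.univ_nonempty (fun ε _ => hmax ε)
    _ = P * k := by
        rw [Finset.sum_const, hcardBool, nsmul_eq_mul, hPdef]
        push_cast
        ring
  linarith [hT1eq, hT1ge, hlt]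
end
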